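/- arXiv:2409.12168 — 2 statements merged into one kernel-verified Lean document; each statement's English description precedes it below -/
import Mathlib

section
/- Let T : I → I be an interval exchange transformation given by permutation π and length vector λ. If M(β) < ∞ for every β ∈ 𝒜 \ {π₀⁻¹(1)}, then every orbit of T is periodic. More precisely, the interval I can be decomposed into a finite number of left-closed right-open intervals such that on each of these intervals some power T^N acts as the identity (the period N being uniform on each such component). -/
open MeasureTheory Set
open scoped Classical

/-- An interval exchange transformation (IET) on the interval `[a, b)`:
an alphabet `Fin d`, bijections `perm0`, `perm1 : Fin d ≃ Fin d` describing the order of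
the exchanged intervals before and after applying the map, and a positive length vector
`len` summing up to `b - a`.  The permutation datum is assumed non-reducible. -/
structure IET where
  d : ℕ
  hd : 0 < d
  a : ℝ
  b : ℝ
  hab : a < b
  perm0 : Fin d ≃ Fin d
  perm1 : Fin d ≃ Fin d
  len : Fin d → ℝ
  len_pos : ∀ α, 0 < len α
  len_sum : ∑ α, len α = b - a
  irred : ∀ k : ℕ, 0 < k → k < d → ¬ (∀ α, (perm0 α : ℕ) < k ↔ (perm1 α : ℕ) < k)

namespace IET

variable (T : IET)

/-- The left endpoint `∂I_α` of the exchanged interval `I_α`. -/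
noncomputable def lep (α : Fin T.d) : ℝ :=
  T.a + ∑ β ∈ Finset.univ.filter (fun β => T.perm0 β < T.perm0 α), T.len β

/-- The left endpoint of the image interval `T(I_α)`. -/
noncomputable def lepImg (α : Fin T.d) : ℝ :=
  T.a + ∑ β ∈ Finset.univ.filter (fun β => T.perm1 β < T.perm1 α), T.len β

/-- The translation amount on `I_α`. -/
noncomputable def transl (α : Fin T.d) : ℝ := T.lepImg α - T.lep α

/-- The exchanged interval `I_α`. -/
noncomputable def interval (α : Fin T.d) : Set ℝ :=
  Set.Ico (T.lep α) (T.lep α + T.len α)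

/-- The image interval `T(I_α)`. -/
noncomputable def intervalImg (α : Fin T.d) : Set ℝ :=
  Set.Ico (T.lepImg α) (T.lepImg α + T.len α)

/-- The IET as a self-map of `ℝ`: it translates each `I_α` onto its image and is
the identity outside `[a, b)`. -/
noncomputable def toFun (x : ℝ) : ℝ :=
  x + ∑ α, if x ∈ T.interval α then T.transl α else 0

/-- The inverse IET `T⁻¹` as a self-map of `ℝ`. -/
noncomputable def invFun (x : ℝ) : ℝ :=
  x + ∑ α, if x ∈ T.intervalImg α then -T.transl α else 0

/-- The iterate `T^n`, `n : ℤ` (negative iterates via `invFun`). -/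
noncomputable def iter (n : ℤ) (x : ℝ) : ℝ :=
  if 0 ≤ n then T.toFun^[n.toNat] x else T.invFun^[(-n).toNat] x

/-- `M(β) = min {n ≥ 1 | T^{-n}(∂I_β) = ∂I_α for some α with π₁ α ≠ 1}`, with the
convention `M(π₀⁻¹ 1) = 1`, and `∞` if no such `n` exists. -/
noncomputable def M (β : Fin T.d) : ℕ∞ :=
  if (T.perm0 β : ℕ) = 0 then 1
  else sInf {e : ℕ∞ | ∃ n : ℕ, e = (n : ℕ∞) ∧ 1 ≤ n ∧
    ∃ α : Fin T.d, (T.perm1 α : ℕ) ≠ 0 ∧ T.invFun^[n] (T.lep β) = T.lep α}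

/-- `N(β) = min {n ≥ 1 | T^{n}(∂I_β) = ∂I_α for some α with π₀ α ≠ 1}`, with the
convention `N(π₁⁻¹ 1) = 1`, and `∞` if no such `n` exists. -/
noncomputable def N (β : Fin T.d) : ℕ∞ :=
  if (T.perm1 β : ℕ) = 0 then 1
  else sInf {e : ℕ∞ | ∃ n : ℕ, e = (n : ℕ∞) ∧ 1 ≤ n ∧
    ∃ α : Fin T.d, (T.perm0 α : ℕ) ≠ 0 ∧ T.toFun^[n] (T.lep β) = T.lep α}

/-- `s` is a (non-trivial) connection of `T`: the orbit segment
`{T^{-k}(∂I_β) | 0 ≤ k ≤ n}` where `π₀ β ≠ 1`, `π₁ α ≠ 1`, `n ≥ 1` and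
`T^{-n}(∂I_β) = ∂I_α`. -/
def IsConnection (s : Set ℝ) : Prop :=
  ∃ (β α : Fin T.d) (n : ℕ), (T.perm0 β : ℕ) ≠ 0 ∧ (T.perm1 α : ℕ) ≠ 0 ∧ 1 ≤ n ∧
    T.invFun^[n] (T.lep β) = T.lep α ∧
    s = (fun k : ℕ => T.invFun^[k] (T.lep β)) '' {k : ℕ | k ≤ n}

/-- `T` is symmetric: `π₁ ∘ π₀⁻¹ (i) = d + 1 - i` (here with `Fin d` indexing:
`perm1 α + perm0 α + 1 = d`). -/
def IsSymm : Prop := ∀ α, (T.perm1 α : ℕ) + (T.perm0 α : ℕ) + 1 = T.d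

/-- The midpoint `c_α` of the exchanged interval `I_α`. -/
noncomputable def center (α : Fin T.d) : ℝ := T.lep α + T.len α / 2

/-- The midpoint `c_{1/2}` of the interval `I = [a, b)`. -/
noncomputable def centerHalf : ℝ := (T.a + T.b) / 2

/-- Midpoints indexed by `𝒜 ∪ {1/2}`; `none` plays the role of `1/2`. -/
noncomputable def centerOpt (β : Option (Fin T.d)) : ℝ :=
  match β with
  | none => T.centerHalf
  | some α => T.center α

/-- `δ_{1/2}`. -/
def deltaHalf (β : Option (Fin T.d)) : ℕ :=
  match β with
  | none => 1
  | some _ => 0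

/-- The symmetric reflection `𝓘_I (x) = a + b - x` of `I = [a, b)`. -/
noncomputable def refl (x : ℝ) : ℝ := T.a + T.b - x

/-- The first return time `r_J(x) = min {n ≥ 1 | T^n x ∈ J}`. -/
noncomputable def returnTime (J : Set ℝ) (x : ℝ) : ℕ :=
  sInf {n : ℕ | 1 ≤ n ∧ T.toFun^[n] x ∈ J}

/-- The first return map `T_J`. -/
noncomputable def firstReturn (J : Set ℝ) (x : ℝ) : ℝ := T.toFun^[T.returnTime J x] x

/-- The first backward return time `b_J(x) = min {n ≥ 1 | T^{-n} x ∈ J}`. -/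
noncomputable def backTime (J : Set ℝ) (x : ℝ) : ℕ :=
  sInf {n : ℕ | 1 ≤ n ∧ T.invFun^[n] x ∈ J}

/-- The first backward return map `p_J` (the inverse of the first return map `T_J`). -/
noncomputable def backReturn (J : Set ℝ) (x : ℝ) : ℝ := T.invFun^[T.backTime J x] x

/-- `m_{J,α} = inf {n ≥ 0 | T^{-n}(∂I_α) ∈ interior J}`. -/
noncomputable def mJ (J : Set ℝ) (α : Fin T.d) : ℕ :=
  sInf {n : ℕ | T.invFun^[n] (T.lep α) ∈ interior J}

/-- `J` is of form (★): a subinterval `[a_J, b_J) ⊆ I` whose endpoints are iterates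
`T^{m₀}(∂I_{α_J})`, `T^{n₀}(∂I_{β_J})` of left endpoints which do not visit `J` at any
earlier time between `0` and `m₀` (resp. `n₀`). -/
def IsStarForm (J : Set ℝ) : Prop :=
  ∃ (aJ bJ : ℝ) (αJ βJ : Fin T.d) (m₀ n₀ : ℤ),
    aJ < bJ ∧ J = Set.Ico aJ bJ ∧ J ⊆ Set.Ico T.a T.b ∧
    aJ = T.iter m₀ (T.lep αJ) ∧ bJ = T.iter n₀ (T.lep βJ) ∧
    (∀ m : ℤ, (0 ≤ m ∧ m ≤ m₀ ∨ m₀ ≤ m ∧ m ≤ 0) → m ≠ m₀ → T.iter m (T.lep αJ) ∉ J) ∧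
    (∀ n : ℤ, (0 ≤ n ∧ n ≤ n₀ ∨ n₀ ≤ n ∧ n ≤ 0) → n ≠ n₀ → T.iter n (T.lep βJ) ∉ J)

/-- `J` is a `β`-symmetric interval (`β : Option (Fin T.d)`, `none` = `1/2`-symmetric):
`J = [c_β - Δ, c_β + Δ)` with `Δ > 0`, contained in `I_β` (resp. in `I`). -/
def IsSymmetricInterval (J : Set ℝ) (β : Option (Fin T.d)) : Prop :=
  ∃ Δ : ℝ, 0 < Δ ∧ J = Set.Ico (T.centerOpt β - Δ) (T.centerOpt β + Δ) ∧
    (match β with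
      | some γ => J ⊆ T.interval γ
      | none => J ⊆ Set.Ico T.a T.b)

/-- `x` is a left endpoint of one of the intervals exchanged by the first return map
`T_J`, where `J = [aJ, bJ)`: either `x = aJ`, or the forward orbit of `x` before its
first return to `J` meets a left endpoint `∂I_α` of `T` or the right endpoint `bJ`. -/
def IsExchLeftEndpoint (J : Set ℝ) (aJ bJ : ℝ) (x : ℝ) : Prop :=
  x = aJ ∨ ∃ k : ℕ, k < T.returnTime J x ∧
    ((∃ α : Fin T.d, T.toFun^[k] x = T.lep α) ∨ (1 ≤ k ∧ T.toFun^[k] x = bJ))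

/-- A Rokhlin tower decomposition of `I = [a, b)` over `J = [aJ, bJ)` associated with the
first return map `T_J`: the bases `[base γ, base γ + blen γ)` partition `J`, the return
time on the base `γ` is constantly `h γ`, each `T^i` (`i ≤ h γ`) acts as a translation on
the base `γ`, and the tower levels `T^i([base γ, base γ + blen γ))`, `i < h γ`, are
pairwise disjoint and partition `I`. -/
def IsTowerDecomp (aJ bJ : ℝ) {k : ℕ} (base blen : Fin k → ℝ) (h : Fin k → ℕ) : Prop :=
  (∀ γ, 0 < blen γ) ∧ (∀ γ, 1 ≤ h γ) ∧
  Pairwise (Function.onFun Disjoint fun γ => Set.Ico (base γ) (base γ + blen γ)) ∧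
  (⋃ γ, Set.Ico (base γ) (base γ + blen γ)) = Set.Ico aJ bJ ∧
  (∀ γ, ∀ i ≤ h γ, ∀ x ∈ Set.Ico (base γ) (base γ + blen γ),
    T.toFun^[i] x - T.toFun^[i] (base γ) = x - base γ) ∧
  (∀ γ, ∀ x ∈ Set.Ico (base γ) (base γ + blen γ), T.returnTime (Set.Ico aJ bJ) x = h γ) ∧
  (⋃ γ, ⋃ i ∈ Finset.range (h γ), T.toFun^[i] '' Set.Ico (base γ) (base γ + blen γ))
    = Set.Ico T.a T.b ∧
  (∀ γ γ' : Fin k, ∀ i i' : ℕ, i < h γ → i' < h γ' → (γ, i) ≠ (γ', i') →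
    Disjoint (T.toFun^[i] '' Set.Ico (base γ) (base γ + blen γ))
      (T.toFun^[i'] '' Set.Ico (base γ') (base γ' + blen γ')))

/-- Replace the length data of an IET, keeping the combinatorial data. -/
noncomputable abbrev replaceLen (len' : Fin T.d → ℝ) (h1 : ∀ α, 0 < len' α)
    (h2 : ∑ α, len' α = T.b - T.a) : IET :=
  { T with len := len', len_pos := h1, len_sum := h2 }

end IET

open IET

/-!
Under `T⁻¹` every left endpoint `∂I_β` comes back to a left endpoint: for `π₀ β ≠ 1` this is
`M(β) < ∞`, and `T⁻¹ a` is the left endpoint of the interval that `T` moves to the front. As `T⁻¹`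
is injective, pigeonhole makes every `∂I_β` periodic, all with a common period `P`. The union `F`
of their orbits is then finite and `T⁻¹`-invariant. For `x ∈ I` let `u` be the largest point of
`F` below `x`. No discontinuity of `T` lies in `(u, x]`, and `T⁻¹`-invariance of `F` propagates
this to `(T^k u, T^k x]`, so every `T^k` translates `[u, x]`; since `T^P u = u`, also `T^P x = x`.
-/

namespace Set

theorem LeftInvOn.iterate {α : Type*} {f g : α → α} {s : Set α} (h : LeftInvOn g f s)
    (hf : MapsTo f s s) (n : ℕ) : LeftInvOn g^[n] f^[n] s := by
  induction n with
  | zero => exact fun _ _ => rfl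
  | succ n ih =>
    intro x hx
    rw [Function.iterate_succ_apply, Function.iterate_succ_apply', h (hf.iterate n hx), ih hx]

/-- Pigeonhole on the successive returns to `L`; injectivity moves the period back to `x`. -/
theorem Finite.exists_isPeriodicPt_of_forall_exists_iterate_mem {α : Type*} {f : α → α}
    {s L : Set α} (hf : InjOn f s) (hfs : MapsTo f s s) (hLs : L ⊆ s) (hL : L.Finite)
    (hret : ∀ y ∈ L, ∃ n, 0 < n ∧ f^[n] y ∈ L) {x : α} (hx : x ∈ L) :
    ∃ n, 0 < n ∧ Function.IsPeriodicPt f n x := by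
  choose! r hr_pos hr_mem using hret
  set g : α → α := fun y => f^[r y] y
  have hg : MapsTo g L L := hr_mem
  have hg_iterate : ∀ m, ∀ y ∈ L, ∃ q, m ≤ q ∧ g^[m] y = f^[q] y := by
    intro m
    induction m with
    | zero => exact fun y _ => ⟨0, le_rfl, rfl⟩
    | succ m ih =>
      intro y hy
      obtain ⟨q, hmq, hq⟩ := ih (g y) (hg hy)
      refine ⟨q + r y, by have := hr_pos y hy; omega, ?_⟩
      rw [Function.iterate_succ_apply, hq, Function.iterate_add_apply]
  obtain ⟨i, j, hij, hgij⟩ :=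
    Set.Finite.exists_lt_map_eq_of_forall_mem (fun i => hg.iterate i hx) hL
  obtain ⟨q, hq_pos, hq⟩ := hg_iterate (j - i) _ (hg.iterate i hx)
  obtain ⟨p, -, hp⟩ := hg_iterate i x hx
  have hz : Function.IsPeriodicPt f q (f^[p] x) := by
    rw [Function.IsPeriodicPt, Function.IsFixedPt, ← hp, ← hq, ← Function.iterate_add_apply,
      Nat.sub_add_cancel hij.le, hgij]
  refine ⟨q, by omega, (hf.iterate hfs p) (hfs.iterate q (hLs hx)) (hLs hx) ?_⟩
  rw [← Function.iterate_add_apply, add_comm, Function.iterate_add_apply]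
  exact hz

end Set

namespace Function

theorem IsPeriodicPt.finite_range_iterate {α : Type*} {f : α → α} {n : ℕ} {x : α}
    (hx : IsPeriodicPt f n x) (hn : 0 < n) : (Set.range fun k => f^[k] x).Finite := by
  refine (Set.finite_range fun k : Fin n => f^[k] x).subset ?_
  rintro _ ⟨k, rfl⟩
  exact ⟨⟨k % n, Nat.mod_lt k hn⟩, hx.iterate_mod_apply k⟩

theorem exists_forall_isPeriodicPt {ι α : Type*} [Fintype ι] {f : α → α} {x : ι → α}
    (h : ∀ i, ∃ n, 0 < n ∧ IsPeriodicPt f n (x i)) :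
    ∃ n, 0 < n ∧ ∀ i, IsPeriodicPt f n (x i) := by
  choose n hn_pos hn using h
  exact ⟨∏ i, n i, Finset.prod_pos fun i _ => hn_pos i,
    fun i => (hn i).trans_dvd (Finset.dvd_prod_of_mem n (Finset.mem_univ i))⟩

end Function

namespace IET

variable (T : IET)

section LeftEndpoint

variable (p : Fin T.d ≃ Fin T.d)

/-- Left endpoint of `I_α` when `[a, b)` is cut into the pieces in the order `p`; `lep` and
`lepImg` are definitionally the cases `p = perm0` and `p = perm1`. -/
noncomputable def leftEndpoint (α : Fin T.d) : ℝ :=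
  T.a + ∑ β ∈ Finset.univ.filter (fun β => p β < p α), T.len β

theorem leftEndpoint_add_len (α : Fin T.d) :
    T.leftEndpoint p α + T.len α =
      T.a + ∑ β ∈ Finset.univ.filter (fun β => p β ≤ p α), T.len β := by
  have hfilter : Finset.univ.filter (fun β => p β ≤ p α)
      = insert α (Finset.univ.filter (fun β => p β < p α)) := by
    ext β
    simp [le_iff_lt_or_eq, p.injective.eq_iff, or_comm]
  rw [hfilter, Finset.sum_insert (by simp), leftEndpoint]
  ring

theorem a_le_leftEndpoint (α : Fin T.d) : T.a ≤ T.leftEndpoint p α :=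
  le_add_of_nonneg_right (Finset.sum_nonneg fun β _ => (T.len_pos β).le)

theorem leftEndpoint_add_len_le_b (α : Fin T.d) : T.leftEndpoint p α + T.len α ≤ T.b := by
  have := Finset.sum_le_sum_of_subset_of_nonneg (Finset.filter_subset
    (fun β => p β ≤ p α) Finset.univ) fun β _ _ => (T.len_pos β).le
  rw [T.leftEndpoint_add_len]
  linarith [T.len_sum]

theorem leftEndpoint_add_len_le_of_lt {α α' : Fin T.d} (h : p α < p α') :
    T.leftEndpoint p α + T.len α ≤ T.leftEndpoint p α' := by
  rw [T.leftEndpoint_add_len, leftEndpoint]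
  gcongr
  exact fun β _ _ => (T.len_pos β).le

theorem leftEndpoint_eq_a {α : Fin T.d} (h : (p α : ℕ) = 0) : T.leftEndpoint p α = T.a := by
  rw [leftEndpoint, Finset.filter_false_of_mem fun β _ => by simp [Fin.lt_def, h],
    Finset.sum_empty, add_zero]

theorem leftEndpoint_eq_add_len {α α' : Fin T.d} (h : (p α' : ℕ) = p α + 1) :
    T.leftEndpoint p α' = T.leftEndpoint p α + T.len α := by
  rw [T.leftEndpoint_add_len, leftEndpoint]
  simp only [Fin.lt_def, Fin.le_def, h, Nat.lt_succ_iff]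

theorem leftEndpoint_add_len_eq_b {α : Fin T.d} (h : (p α : ℕ) + 1 = T.d) :
    T.leftEndpoint p α + T.len α = T.b := by
  rw [T.leftEndpoint_add_len, Finset.filter_true_of_mem fun β _ => by
    have := (p β).isLt; rw [Fin.le_def]; omega, T.len_sum]
  ring

theorem exists_mem_Ico_leftEndpoint {x : ℝ} (hx : x ∈ Ico T.a T.b) :
    ∃ α, x ∈ Ico (T.leftEndpoint p α) (T.leftEndpoint p α + T.len α) := by
  set s := Finset.univ.filter fun α => T.leftEndpoint p α ≤ x
  have hs : s.Nonempty := ⟨p.symm ⟨0, T.hd⟩, by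
    simpa [s, T.leftEndpoint_eq_a p (α := p.symm ⟨0, T.hd⟩) (by simp)] using hx.1⟩
  obtain ⟨α, hαs, hmax⟩ := s.exists_max_image (fun α => (p α : ℕ)) hs
  refine ⟨α, (Finset.mem_filter.mp hαs).2, lt_of_not_ge fun hle => ?_⟩
  by_cases hlast : (p α : ℕ) + 1 < T.d
  · have hnext : p.symm ⟨_, hlast⟩ ∈ s := by
      simpa [s, T.leftEndpoint_eq_add_len p (α := α) (α' := p.symm ⟨_, hlast⟩) (by simp)]
        using hle
    have := hmax _ hnext
    simp at this
  · have := T.leftEndpoint_add_len_eq_b p (α := α) (by have := (p α).isLt; omega)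
    linarith [hx.2]

theorem eq_of_mem_Ico_leftEndpoint {x : ℝ} {α α' : Fin T.d}
    (h : x ∈ Ico (T.leftEndpoint p α) (T.leftEndpoint p α + T.len α))
    (h' : x ∈ Ico (T.leftEndpoint p α') (T.leftEndpoint p α' + T.len α')) : α = α' := by
  by_contra hne
  rcases lt_or_gt_of_ne (p.injective.ne hne) with hlt | hlt
  · linarith [T.leftEndpoint_add_len_le_of_lt p hlt, h.2, h'.1]
  · linarith [T.leftEndpoint_add_len_le_of_lt p hlt, h'.2, h.1]

end LeftEndpoint

theorem exists_mem_interval {x : ℝ} (hx : x ∈ Ico T.a T.b) : ∃ α, x ∈ T.interval α :=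
  T.exists_mem_Ico_leftEndpoint T.perm0 hx

theorem exists_mem_intervalImg {x : ℝ} (hx : x ∈ Ico T.a T.b) : ∃ α, x ∈ T.intervalImg α :=
  T.exists_mem_Ico_leftEndpoint T.perm1 hx

theorem interval_subset (α : Fin T.d) : T.interval α ⊆ Ico T.a T.b :=
  Ico_subset_Ico (T.a_le_leftEndpoint T.perm0 α) (T.leftEndpoint_add_len_le_b T.perm0 α)

theorem intervalImg_subset (α : Fin T.d) : T.intervalImg α ⊆ Ico T.a T.b :=
  Ico_subset_Ico (T.a_le_leftEndpoint T.perm1 α) (T.leftEndpoint_add_len_le_b T.perm1 α)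

theorem lep_mem_interval (α : Fin T.d) : T.lep α ∈ T.interval α :=
  left_mem_Ico.mpr (lt_add_of_pos_right _ (T.len_pos α))

theorem toFun_of_mem_interval {x : ℝ} {α : Fin T.d} (h : x ∈ T.interval α) :
    T.toFun x = x + T.transl α := by
  rw [toFun, Finset.sum_eq_single α (fun γ _ hγ => if_neg fun (hγx : x ∈ T.interval γ) =>
    hγ (T.eq_of_mem_Ico_leftEndpoint T.perm0 hγx h)) (by simp), if_pos h]

theorem invFun_of_mem_intervalImg {x : ℝ} {α : Fin T.d} (h : x ∈ T.intervalImg α) :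
    T.invFun x = x - T.transl α := by
  rw [invFun, Finset.sum_eq_single α (fun γ _ hγ => if_neg fun (hγx : x ∈ T.intervalImg γ) =>
    hγ (T.eq_of_mem_Ico_leftEndpoint T.perm1 hγx h)) (by simp), if_pos h, sub_eq_add_neg]

theorem toFun_mem_intervalImg {x : ℝ} {α : Fin T.d} (h : x ∈ T.interval α) :
    T.toFun x ∈ T.intervalImg α := by
  rw [T.toFun_of_mem_interval h, transl]
  exact ⟨by linarith [h.1], by linarith [h.2]⟩

theorem invFun_mem_interval {x : ℝ} {α : Fin T.d} (h : x ∈ T.intervalImg α) :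
    T.invFun x ∈ T.interval α := by
  rw [T.invFun_of_mem_intervalImg h, transl]
  exact ⟨by linarith [h.1], by linarith [h.2]⟩

theorem mapsTo_toFun : MapsTo T.toFun (Ico T.a T.b) (Ico T.a T.b) := fun _ hx =>
  have ⟨α, hα⟩ := T.exists_mem_interval hx
  T.intervalImg_subset α (T.toFun_mem_intervalImg hα)

theorem mapsTo_invFun : MapsTo T.invFun (Ico T.a T.b) (Ico T.a T.b) := fun _ hx =>
  have ⟨α, hα⟩ := T.exists_mem_intervalImg hx
  T.interval_subset α (T.invFun_mem_interval hα)

theorem leftInvOn_invFun_toFun : LeftInvOn T.invFun T.toFun (Ico T.a T.b) := fun x hx => by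
  obtain ⟨α, hα⟩ := T.exists_mem_interval hx
  rw [T.invFun_of_mem_intervalImg (T.toFun_mem_intervalImg hα), T.toFun_of_mem_interval hα,
    add_sub_cancel_right]

theorem leftInvOn_toFun_invFun : LeftInvOn T.toFun T.invFun (Ico T.a T.b) := fun x hx => by
  obtain ⟨α, hα⟩ := T.exists_mem_intervalImg hx
  rw [T.toFun_of_mem_interval (T.invFun_mem_interval hα), T.invFun_of_mem_intervalImg hα,
    sub_add_cancel]

theorem lep_mem_Ico (α : Fin T.d) : T.lep α ∈ Ico T.a T.b :=
  T.interval_subset α (T.lep_mem_interval α)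

theorem invFun_lepImg (α : Fin T.d) : T.invFun (T.lepImg α) = T.lep α := by
  rw [T.invFun_of_mem_intervalImg (left_mem_Ico.mpr (lt_add_of_pos_right _ (T.len_pos α))),
    transl, sub_sub_cancel]

theorem exists_lep_eq_lep_add_len {α : Fin T.d} (h : T.lep α + T.len α < T.b) :
    ∃ α', T.lep α' = T.lep α + T.len α := by
  by_cases hlast : (T.perm0 α : ℕ) + 1 < T.d
  · exact ⟨T.perm0.symm ⟨_, hlast⟩, T.leftEndpoint_eq_add_len T.perm0 (by simp)⟩
  · have := T.leftEndpoint_add_len_eq_b T.perm0 (α := α) (by have := (T.perm0 α).isLt; omega)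
    exact absurd this h.ne

theorem exists_iterate_invFun_lep_mem_range
    (hM : ∀ β : Fin T.d, (T.perm0 β : ℕ) ≠ 0 → T.M β ≠ ⊤) (β : Fin T.d) :
    ∃ n, 0 < n ∧ T.invFun^[n] (T.lep β) ∈ range T.lep := by
  by_cases h0 : (T.perm0 β : ℕ) = 0
  · refine ⟨1, one_pos, T.perm1.symm ⟨0, T.hd⟩, ?_⟩
    have hβ : T.lep β = T.a := T.leftEndpoint_eq_a T.perm0 h0
    have hγ : T.lepImg (T.perm1.symm ⟨0, T.hd⟩) = T.a := T.leftEndpoint_eq_a T.perm1 (by simp)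
    rw [Function.iterate_one, hβ, ← hγ, invFun_lepImg]
  · have hMβ := hM β h0
    rw [M, if_neg h0, Ne, sInf_eq_top] at hMβ
    obtain ⟨_, ⟨n, rfl, hn, α, -, hα⟩, -⟩ := not_forall₂.mp hMβ
    exact ⟨n, hn, α, hα.symm⟩

theorem exists_isPeriodicPt_lep (hM : ∀ β : Fin T.d, (T.perm0 β : ℕ) ≠ 0 → T.M β ≠ ⊤)
    (β : Fin T.d) : ∃ n, 0 < n ∧ Function.IsPeriodicPt T.toFun n (T.lep β) := by
  have hleps : range T.lep ⊆ Ico T.a T.b := range_subset_iff.mpr T.lep_mem_Ico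
  obtain ⟨n, hn, hper⟩ := Set.Finite.exists_isPeriodicPt_of_forall_exists_iterate_mem
    T.leftInvOn_toFun_invFun.injOn T.mapsTo_invFun hleps (finite_range _)
    (forall_mem_range.mpr (T.exists_iterate_invFun_lep_mem_range hM)) (mem_range_self β)
  refine ⟨n, hn, show T.toFun^[n] (T.lep β) = T.lep β from ?_⟩
  conv_lhs => rw [← hper.eq]
  exact (T.leftInvOn_toFun_invFun.iterate T.mapsTo_invFun n) (T.lep_mem_Ico β)

section Translation

variable {T} {F : Set ℝ} {u x : ℝ}

theorem exists_mem_interval_of_disjoint (hF : range T.lep ⊆ F) (hu : u ∈ Ico T.a T.b)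
    (hx : x ∈ Ico T.a T.b) (hux : u ≤ x) (hgap : Disjoint (Ioc u x) F) :
    ∃ α, u ∈ T.interval α ∧ x ∈ T.interval α := by
  obtain ⟨α, hα⟩ := T.exists_mem_interval hu
  refine ⟨α, hα, hα.1.trans hux, lt_of_not_ge fun hle => ?_⟩
  obtain ⟨α', hα'⟩ := T.exists_lep_eq_lep_add_len (hle.trans_lt hx.2)
  exact hgap.notMem_of_mem_left (hα' ▸ ⟨hα.2, hle⟩) (hF (mem_range_self α'))

theorem toFun_eq_add_of_disjoint (hF : range T.lep ⊆ F) (hu : u ∈ Ico T.a T.b)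
    (hx : x ∈ Ico T.a T.b) (hux : u ≤ x) (hgap : Disjoint (Ioc u x) F) :
    T.toFun x = T.toFun u + (x - u) := by
  obtain ⟨α, hu, hx⟩ := exists_mem_interval_of_disjoint hF hu hx hux hgap
  rw [T.toFun_of_mem_interval hu, T.toFun_of_mem_interval hx]
  ring

/-- A point of `F` between `T u` and `T x` would pull back to a point of `F` between `u`
and `x`, because `T` translates `[u, x]`. -/
theorem disjoint_Ioc_toFun (hF : range T.lep ⊆ F) (hFinv : MapsTo T.invFun F F)
    (hu : u ∈ Ico T.a T.b) (hx : x ∈ Ico T.a T.b) (hux : u ≤ x) (hgap : Disjoint (Ioc u x) F) :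
    Disjoint (Ioc (T.toFun u) (T.toFun x)) F := by
  rw [disjoint_left]
  rintro f ⟨hf₁, hf₂⟩ hfF
  rw [toFun_eq_add_of_disjoint hF hu hx hux hgap] at hf₂
  set y := u + (f - T.toFun u)
  have hy : y ∈ Ioc u x := ⟨by linarith, by linarith⟩
  have hyI : y ∈ Ico T.a T.b := ⟨hu.1.trans hy.1.le, hy.2.trans_lt hx.2⟩
  have hTy : T.toFun y = f := by
    rw [toFun_eq_add_of_disjoint hF hu hyI hy.1.le (hgap.mono_left (Ioc_subset_Ioc_right hy.2))]
    ring
  have hyF : y ∈ F := by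
    rw [← T.leftInvOn_invFun_toFun hyI, hTy]
    exact hFinv hfF
  exact hgap.notMem_of_mem_left hy hyF

theorem iterate_toFun_eq_add_of_disjoint (hF : range T.lep ⊆ F) (hFinv : MapsTo T.invFun F F)
    (hu : u ∈ Ico T.a T.b) (hx : x ∈ Ico T.a T.b) (hux : u ≤ x) (hgap : Disjoint (Ioc u x) F)
    (k : ℕ) : T.toFun^[k] x = T.toFun^[k] u + (x - u) := by
  induction k generalizing u x with
  | zero => simp
  | succ k ih =>
    have hTx := toFun_eq_add_of_disjoint hF hu hx hux hgap
    rw [Function.iterate_succ_apply, Function.iterate_succ_apply,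
      ih (T.mapsTo_toFun hu) (T.mapsTo_toFun hx) (by linarith)
        (disjoint_Ioc_toFun hF hFinv hu hx hux hgap), hTx]
    ring

end Translation

def lepOrbits : Set ℝ := ⋃ β, range fun k => T.toFun^[k] (T.lep β)

theorem range_lep_subset_lepOrbits : range T.lep ⊆ T.lepOrbits :=
  range_subset_iff.mpr fun β => mem_iUnion.mpr ⟨β, 0, rfl⟩

theorem lepOrbits_subset_Ico : T.lepOrbits ⊆ Ico T.a T.b :=
  iUnion_subset fun β => range_subset_iff.mpr fun k => T.mapsTo_toFun.iterate k (T.lep_mem_Ico β)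

section CommonPeriod

variable {T} {P : ℕ}

theorem isPeriodicPt_of_mem_lepOrbits (hP : ∀ β, Function.IsPeriodicPt T.toFun P (T.lep β))
    {y : ℝ} (hy : y ∈ T.lepOrbits) : Function.IsPeriodicPt T.toFun P y := by
  obtain ⟨β, k, rfl⟩ := mem_iUnion.mp hy
  exact (hP β).apply_iterate k

theorem lepOrbits_finite (hP : ∀ β, Function.IsPeriodicPt T.toFun P (T.lep β)) (hP0 : 0 < P) :
    T.lepOrbits.Finite :=
  finite_iUnion fun β => (hP β).finite_range_iterate hP0

theorem mapsTo_invFun_lepOrbits (hP : ∀ β, Function.IsPeriodicPt T.toFun P (T.lep β))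
    (hP0 : 0 < P) : MapsTo T.invFun T.lepOrbits T.lepOrbits := by
  intro _ hy
  obtain ⟨β, k, rfl⟩ := mem_iUnion.mp hy
  have hprev : T.toFun^[k] (T.lep β) = T.toFun (T.toFun^[k + P - 1] (T.lep β)) := by
    rw [← Function.iterate_succ_apply' T.toFun, show (k + P - 1).succ = k + P by omega,
      Function.iterate_add_apply, (hP β).eq]
  dsimp only
  rw [hprev, T.leftInvOn_invFun_toFun (T.mapsTo_toFun.iterate _ (T.lep_mem_Ico β))]
  exact mem_iUnion.mpr ⟨β, _, rfl⟩

theorem iterate_toFun_eq_self (hP : ∀ β, Function.IsPeriodicPt T.toFun P (T.lep β))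
    (hP0 : 0 < P) {x : ℝ} (hx : x ∈ Ico T.a T.b) : T.toFun^[P] x = x := by
  have ha : T.a ∈ T.lepOrbits ∩ Iic x := ⟨T.range_lep_subset_lepOrbits
    ⟨T.perm0.symm ⟨0, T.hd⟩, T.leftEndpoint_eq_a T.perm0 (by simp)⟩, hx.1⟩
  obtain ⟨u, ⟨huF, hux⟩, hmax⟩ :=
    exists_max_image _ id ((lepOrbits_finite hP hP0).inter_of_left _) ⟨_, ha⟩
  have hgap : Disjoint (Ioc u x) T.lepOrbits := disjoint_left.mpr fun f hf hfF =>
    (hmax f ⟨hfF, hf.2⟩).not_gt hf.1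
  rw [iterate_toFun_eq_add_of_disjoint T.range_lep_subset_lepOrbits
    (mapsTo_invFun_lepOrbits hP hP0) (T.lepOrbits_subset_Ico huF) hx hux hgap,
    (isPeriodicPt_of_mem_lepOrbits hP huF).eq]
  ring

end CommonPeriod

theorem exists_iterate_toFun_eq_self (hM : ∀ β : Fin T.d, (T.perm0 β : ℕ) ≠ 0 → T.M β ≠ ⊤) :
    ∃ P, 0 < P ∧ ∀ x ∈ Ico T.a T.b, T.toFun^[P] x = x := by
  obtain ⟨P, hP0, hP⟩ := Function.exists_forall_isPeriodicPt (T.exists_isPeriodicPt_lep hM)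
  exact ⟨P, hP0, fun x hx => iterate_toFun_eq_self hP hP0 hx⟩

end IET

/-- if `M(β) < ∞` for every `β ≠ π₀⁻¹(1)`, then every orbit of `T` is
periodic; more precisely `I` decomposes into finitely many left-closed right-open
intervals on each of which some power of `T` is the identity. -/
theorem stmt3 (T : IET)
    (hM : ∀ β : Fin T.d, (T.perm0 β : ℕ) ≠ 0 → T.M β ≠ ⊤) :
    (∀ x ∈ Set.Ico T.a T.b, ∃ N : ℕ, 1 ≤ N ∧ T.toFun^[N] x = x) ∧
    ∃ (k : ℕ) (u v : Fin k → ℝ) (N : Fin k → ℕ),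
      (∀ j, u j < v j) ∧
      Pairwise (Function.onFun Disjoint fun j => Set.Ico (u j) (v j)) ∧
      (⋃ j, Set.Ico (u j) (v j)) = Set.Ico T.a T.b ∧
      (∀ j, 1 ≤ N j) ∧
      (∀ j, ∀ x ∈ Set.Ico (u j) (v j), T.toFun^[N j] x = x) := by
  obtain ⟨P, hP, hfix⟩ := T.exists_iterate_toFun_eq_self hM
  exact ⟨fun x hx => ⟨P, hP, hfix x hx⟩, 1, fun _ => T.a, fun _ => T.b, fun _ => P,
    fun _ => T.hab, Subsingleton.pairwise, iUnion_const _, fun _ => hP, fun _ => hfix⟩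
end

section
/- Let T : I → I be an interval exchange transformation. If T is ergodic with respect to Lebesgue measure, then T is minimal: the full orbit {T^n(x) : n ∈ ℤ} of every point x ∈ I is dense in I. In particular, for every x, y ∈ I and every ε > 0 there exists m ∈ ℕ such that |T^{-m}(y) − x| < 2ε. -/
open MeasureTheory Set
open scoped Classical

open IET

namespace IET

variable (T : IET)

/-! ### Partition lemmas -/

/-- generic left endpoint function for a permutation -/
noncomputable def pl (p : Fin T.d ≃ Fin T.d) (α : Fin T.d) : ℝ :=
  T.a + ∑ β ∈ Finset.univ.filter (fun β => p β < p α), T.len β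

lemma lep_eq_pl : T.lep = T.pl T.perm0 := rfl
lemma lepImg_eq_pl : T.lepImg = T.pl T.perm1 := rfl

/-- left endpoint by natural index -/
noncomputable def plN (p : Fin T.d ≃ Fin T.d) (k : ℕ) : ℝ :=
  T.a + ∑ β ∈ Finset.univ.filter (fun β => (p β : ℕ) < k), T.len β

lemma pl_eq_plN (p : Fin T.d ≃ Fin T.d) (α : Fin T.d) : T.pl p α = T.plN p (p α) := rfl

lemma plN_zero (p : Fin T.d ≃ Fin T.d) : T.plN p 0 = T.a := by
  unfold plN
  rw [Finset.filter_false_of_mem (fun β _ => by omega)]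
  simp

lemma plN_last (p : Fin T.d ≃ Fin T.d) : T.plN p T.d = T.b := by
  unfold plN
  rw [Finset.filter_true_of_mem (fun β _ => (p β).isLt)]
  rw [T.len_sum]; ring

lemma plN_succ (p : Fin T.d ≃ Fin T.d) (k : ℕ) (hk : k < T.d) :
    T.plN p (k + 1) = T.plN p k + T.len (p.symm ⟨k, hk⟩) := by
  unfold plN
  have h : Finset.univ.filter (fun β => (p β : ℕ) < k + 1)
      = insert (p.symm ⟨k, hk⟩) (Finset.univ.filter (fun β => (p β : ℕ) < k)) := by
    ext β
    simp only [Finset.mem_insert, Finset.mem_filter, Finset.mem_univ, true_and]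
    have h2 : (β = p.symm ⟨k, hk⟩) ↔ ((p β : ℕ) = k) := by
      rw [Equiv.eq_symm_apply, Fin.ext_iff]
    rw [h2]
    omega
  rw [h, Finset.sum_insert (by simp)]
  ring

lemma plN_mono (p : Fin T.d ≃ Fin T.d) {k l : ℕ} (h : k ≤ l) : T.plN p k ≤ T.plN p l := by
  unfold plN
  have hsub : Finset.univ.filter (fun β => (p β : ℕ) < k)
      ⊆ Finset.univ.filter (fun β => (p β : ℕ) < l) := by
    intro β hb
    simp only [Finset.mem_filter, Finset.mem_univ, true_and] at hb ⊢
    omega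
  have := Finset.sum_le_sum_of_subset_of_nonneg hsub
    (fun β _ _ => (T.len_pos β).le)
  linarith

lemma pl_add_len (p : Fin T.d ≃ Fin T.d) (α : Fin T.d) :
    T.pl p α + T.len α = T.plN p ((p α : ℕ) + 1) := by
  rw [pl_eq_plN, plN_succ _ p _ (p α).isLt]
  congr 2
  simp

lemma pl_ge (p : Fin T.d ≃ Fin T.d) (α : Fin T.d) : T.a ≤ T.pl p α := by
  rw [pl_eq_plN]
  have h0 := T.plN_zero p
  have hm := T.plN_mono p (Nat.zero_le (p α : ℕ))
  linarith

lemma pl_add_len_le (p : Fin T.d ≃ Fin T.d) (α : Fin T.d) : T.pl p α + T.len α ≤ T.b := by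
  rw [pl_add_len]
  have h := T.plN_mono p (show (p α : ℕ) + 1 ≤ T.d from (p α).isLt)
  rw [T.plN_last p] at h
  exact h

/-- the pieces cover [a,b) -/
lemma pl_cover (p : Fin T.d ≃ Fin T.d) {z : ℝ} (hz : z ∈ Set.Ico T.a T.b) :
    ∃ α, z ∈ Set.Ico (T.pl p α) (T.pl p α + T.len α) := by
  classical
  set K := (Finset.range T.d).filter (fun k => T.plN p k ≤ z) with hK
  have h0K : (0 : ℕ) ∈ K := by
    simp only [hK, Finset.mem_filter, Finset.mem_range]
    exact ⟨T.hd, by rw [T.plN_zero]; exact hz.1⟩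
  have hKne : K.Nonempty := ⟨0, h0K⟩
  set k := K.max' hKne with hk
  have hkK : k ∈ K := K.max'_mem hKne
  simp only [hK, Finset.mem_filter, Finset.mem_range] at hkK
  obtain ⟨hkd, hkz⟩ := hkK
  refine ⟨p.symm ⟨k, hkd⟩, ?_, ?_⟩
  · rw [pl_eq_plN]
    simp only [Equiv.apply_symm_apply]
    exact hkz
  · rw [pl_add_len]
    simp only [Equiv.apply_symm_apply]
    by_cases hlast : k + 1 = T.d
    · rw [hlast, T.plN_last p]; exact hz.2
    · by_contra hcon
      push_neg at hcon
      have : k + 1 ∈ K := by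
        simp only [hK, Finset.mem_filter, Finset.mem_range]
        exact ⟨by omega, hcon⟩
      have := K.le_max' _ this
      omega

/-- the pieces are disjoint: actually the useful form -/
lemma pl_disj (p : Fin T.d ≃ Fin T.d) {α β : Fin T.d} (hab : α ≠ β) {z : ℝ}
    (hz : z ∈ Set.Ico (T.pl p α) (T.pl p α + T.len α)) :
    z ∉ Set.Ico (T.pl p β) (T.pl p β + T.len β) := by
  intro hz2
  have hne : p α ≠ p β := fun h => hab (p.injective h)
  rcases lt_or_gt_of_ne hne with h | h
  · have h2 : (p α : ℕ) + 1 ≤ (p β : ℕ) := h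
    have := (T.pl_add_len p α) ▸ (T.pl_eq_plN p β) ▸ T.plN_mono p h2
    have h3 := hz.1; have h4 := hz.2; have h5 := hz2.1; have h6 := hz2.2
    linarith
  · have h2 : (p β : ℕ) + 1 ≤ (p α : ℕ) := h
    have := (T.pl_add_len p β) ▸ (T.pl_eq_plN p α) ▸ T.plN_mono p h2
    have h3 := hz.1; have h4 := hz.2; have h5 := hz2.1; have h6 := hz2.2
    linarith

/-- successor: right endpoint of a piece is b or another left endpoint -/
lemma pl_succ_adj (p : Fin T.d ≃ Fin T.d) (β : Fin T.d) :
    T.pl p β + T.len β = T.b ∨ ∃ α, T.pl p α = T.pl p β + T.len β := by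
  by_cases h : (p β : ℕ) + 1 = T.d
  · left; rw [pl_add_len, h, T.plN_last]
  · right
    have hlt : (p β : ℕ) + 1 < T.d := by have := (p β).isLt; omega
    refine ⟨p.symm ⟨(p β : ℕ) + 1, hlt⟩, ?_⟩
    rw [pl_eq_plN, pl_add_len]
    simp only [Equiv.apply_symm_apply]

/-- predecessor: every left endpoint > a is a right endpoint of a piece -/
lemma pl_pred_adj (p : Fin T.d ≃ Fin T.d) {c : ℝ}
    (hc : (∃ α, c = T.pl p α) ∧ T.a < c ∨ c = T.b) :
    ∃ β, T.pl p β + T.len β = c := by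
  rcases hc with ⟨⟨α, rfl⟩, hgt⟩ | rfl
  · have hne : (p α : ℕ) ≠ 0 := by
      intro h0
      rw [T.pl_eq_plN p α, h0, T.plN_zero] at hgt
      exact lt_irrefl _ hgt
    have hlt : (p α : ℕ) - 1 < T.d := by have := (p α).isLt; omega
    refine ⟨p.symm ⟨(p α : ℕ) - 1, hlt⟩, ?_⟩
    rw [pl_add_len, pl_eq_plN]
    simp only [Equiv.apply_symm_apply]
    congr 1
    omega
  · have hlt : T.d - 1 < T.d := by have := T.hd; omega
    refine ⟨p.symm ⟨T.d - 1, hlt⟩, ?_⟩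
    rw [pl_add_len]
    simp only [Equiv.apply_symm_apply]
    rw [show T.d - 1 + 1 = T.d by have := T.hd; omega, T.plN_last]

end IET

namespace IET

variable (T : IET)

/-! ### toFun / invFun basics -/

lemma interval_def (α : Fin T.d) :
    T.interval α = Set.Ico (T.pl T.perm0 α) (T.pl T.perm0 α + T.len α) := rfl

lemma intervalImg_def (α : Fin T.d) :
    T.intervalImg α = Set.Ico (T.pl T.perm1 α) (T.pl T.perm1 α + T.len α) := rfl

lemma interval_sub (α : Fin T.d) : T.interval α ⊆ Set.Ico T.a T.b := by
  rw [interval_def]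
  intro z hz
  exact ⟨le_trans (T.pl_ge T.perm0 α) hz.1, lt_of_lt_of_le hz.2 (T.pl_add_len_le T.perm0 α)⟩

lemma intervalImg_sub (α : Fin T.d) : T.intervalImg α ⊆ Set.Ico T.a T.b := by
  rw [intervalImg_def]
  intro z hz
  exact ⟨le_trans (T.pl_ge T.perm1 α) hz.1, lt_of_lt_of_le hz.2 (T.pl_add_len_le T.perm1 α)⟩

lemma exists_interval {z : ℝ} (hz : z ∈ Set.Ico T.a T.b) : ∃ α, z ∈ T.interval α :=
  T.pl_cover T.perm0 hz

lemma exists_intervalImg {z : ℝ} (hz : z ∈ Set.Ico T.a T.b) : ∃ α, z ∈ T.intervalImg α :=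
  T.pl_cover T.perm1 hz

lemma toFun_eq_of_mem {z : ℝ} {α : Fin T.d} (hz : z ∈ T.interval α) :
    T.toFun z = z + T.transl α := by
  unfold toFun
  congr 1
  rw [Finset.sum_eq_single_of_mem α (Finset.mem_univ α)]
  · simp [hz]
  · intro β _ hne
    have : z ∉ T.interval β := T.pl_disj T.perm0 (Ne.symm hne) hz
    simp [this]

lemma invFun_eq_of_mem {z : ℝ} {α : Fin T.d} (hz : z ∈ T.intervalImg α) :
    T.invFun z = z - T.transl α := by
  unfold invFun
  have h : ∑ β, (if z ∈ T.intervalImg β then -T.transl β else 0) = -T.transl α := by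
    rw [Finset.sum_eq_single_of_mem α (Finset.mem_univ α)]
    · simp [hz]
    · intro β _ hne
      have : z ∉ T.intervalImg β := T.pl_disj T.perm1 (Ne.symm hne) hz
      simp [this]
  rw [h]; ring

lemma toFun_eq_self {z : ℝ} (hz : z ∉ Set.Ico T.a T.b) : T.toFun z = z := by
  unfold toFun
  rw [Finset.sum_eq_zero]
  · ring
  · intro α _
    have : z ∉ T.interval α := fun h => hz (T.interval_sub α h)
    simp [this]

lemma invFun_eq_self {z : ℝ} (hz : z ∉ Set.Ico T.a T.b) : T.invFun z = z := by
  unfold invFun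
  rw [Finset.sum_eq_zero]
  · ring
  · intro α _
    have : z ∉ T.intervalImg α := fun h => hz (T.intervalImg_sub α h)
    simp [this]

lemma toFun_mem_img {z : ℝ} {α : Fin T.d} (hz : z ∈ T.interval α) :
    T.toFun z ∈ T.intervalImg α := by
  rw [T.toFun_eq_of_mem hz]
  unfold transl
  rcases hz with ⟨h1, h2⟩
  constructor
  · linarith
  · linarith

lemma invFun_mem {z : ℝ} {α : Fin T.d} (hz : z ∈ T.intervalImg α) :
    T.invFun z ∈ T.interval α := by
  rw [T.invFun_eq_of_mem hz]
  unfold transl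
  rcases hz with ⟨h1, h2⟩
  constructor
  · linarith
  · linarith

lemma toFun_mem_Ico {z : ℝ} (hz : z ∈ Set.Ico T.a T.b) : T.toFun z ∈ Set.Ico T.a T.b := by
  obtain ⟨α, hα⟩ := T.exists_interval hz
  exact T.intervalImg_sub α (T.toFun_mem_img hα)

lemma invFun_mem_Ico {z : ℝ} (hz : z ∈ Set.Ico T.a T.b) : T.invFun z ∈ Set.Ico T.a T.b := by
  obtain ⟨α, hα⟩ := T.exists_intervalImg hz
  exact T.interval_sub α (T.invFun_mem hα)

lemma invFun_toFun (z : ℝ) : T.invFun (T.toFun z) = z := by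
  by_cases hz : z ∈ Set.Ico T.a T.b
  · obtain ⟨α, hα⟩ := T.exists_interval hz
    rw [T.invFun_eq_of_mem (T.toFun_mem_img hα), T.toFun_eq_of_mem hα]
    ring
  · rw [T.toFun_eq_self hz, T.invFun_eq_self hz]

lemma toFun_invFun (z : ℝ) : T.toFun (T.invFun z) = z := by
  by_cases hz : z ∈ Set.Ico T.a T.b
  · obtain ⟨α, hα⟩ := T.exists_intervalImg hz
    rw [T.toFun_eq_of_mem (T.invFun_mem hα), T.invFun_eq_of_mem hα]
    ring
  · rw [T.invFun_eq_self hz, T.toFun_eq_self hz]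

lemma toFun_bijective : Function.Bijective T.toFun :=
  Function.bijective_iff_has_inverse.mpr ⟨T.invFun, T.invFun_toFun, T.toFun_invFun⟩

lemma invFun_bijective : Function.Bijective T.invFun :=
  Function.bijective_iff_has_inverse.mpr ⟨T.toFun, T.toFun_invFun, T.invFun_toFun⟩

lemma toFun_iter_mem_Ico {z : ℝ} (hz : z ∈ Set.Ico T.a T.b) (n : ℕ) :
    T.toFun^[n] z ∈ Set.Ico T.a T.b := by
  induction n with
  | zero => exact hz
  | succ n ih => rw [Function.iterate_succ_apply']; exact T.toFun_mem_Ico ih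

lemma invFun_iter_mem_Ico {z : ℝ} (hz : z ∈ Set.Ico T.a T.b) (n : ℕ) :
    T.invFun^[n] z ∈ Set.Ico T.a T.b := by
  induction n with
  | zero => exact hz
  | succ n ih => rw [Function.iterate_succ_apply']; exact T.invFun_mem_Ico ih

end IET

namespace IET

variable (T : IET)

/-! ### local translation structure -/

/-- forward cut points: left endpoints of exchanged intervals together with `b` -/
def cutsD : Set ℝ := {x | (∃ α, x = T.lep α) ∨ x = T.b}

/-- backward cut points: left endpoints of image intervals together with `b` -/
def cutsI : Set ℝ := {x | (∃ α, x = T.lepImg α) ∨ x = T.b}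

lemma cutsD_finite : T.cutsD.Finite := by
  have : T.cutsD ⊆ (Set.range T.lep) ∪ {T.b} := by
    rintro x (⟨α, rfl⟩ | rfl)
    · exact Or.inl ⟨α, rfl⟩
    · exact Or.inr rfl
  exact Set.Finite.subset ((Set.finite_range T.lep).union (Set.finite_singleton _)) this

lemma cutsI_finite : T.cutsI.Finite := by
  have : T.cutsI ⊆ (Set.range T.lepImg) ∪ {T.b} := by
    rintro x (⟨α, rfl⟩ | rfl)
    · exact Or.inl ⟨α, rfl⟩
    · exact Or.inr rfl
  exact Set.Finite.subset ((Set.finite_range T.lepImg).union (Set.finite_singleton _)) this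

lemma b_mem_cutsD : T.b ∈ T.cutsD := Or.inr rfl
lemma b_mem_cutsI : T.b ∈ T.cutsI := Or.inr rfl

/-- right local translation for toFun, at every point -/
lemma toFun_right_loc (z : ℝ) :
    ∃ δ > 0, ∀ w, z ≤ w → w < z + δ → T.toFun w = T.toFun z + (w - z) := by
  by_cases hz : z ∈ Set.Ico T.a T.b
  · obtain ⟨α, hα⟩ := T.exists_interval hz
    refine ⟨T.lep α + T.len α - z, by rcases hα with ⟨h1, h2⟩; linarith, fun w hw1 hw2 => ?_⟩
    have hwα : w ∈ T.interval α := ⟨le_trans hα.1 hw1, by linarith⟩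
    rw [T.toFun_eq_of_mem hwα, T.toFun_eq_of_mem hα]
    ring
  · rcases lt_or_ge z T.a with h | h
    · refine ⟨T.a - z, by linarith, fun w hw1 hw2 => ?_⟩
      have hw : w ∉ Set.Ico T.a T.b := fun hc => by rcases hc with ⟨h1, _⟩; linarith
      rw [T.toFun_eq_self hw, T.toFun_eq_self hz]
      ring
    · have hzb : T.b ≤ z := by
        by_contra hc
        exact hz ⟨h, lt_of_not_ge hc⟩
      refine ⟨1, one_pos, fun w hw1 hw2 => ?_⟩
      have hw : w ∉ Set.Ico T.a T.b := fun hc => by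
        rcases hc with ⟨_, h2⟩; linarith
      rw [T.toFun_eq_self hw, T.toFun_eq_self hz]
      ring

/-- right local translation for invFun, at every point -/
lemma invFun_right_loc (z : ℝ) :
    ∃ δ > 0, ∀ w, z ≤ w → w < z + δ → T.invFun w = T.invFun z + (w - z) := by
  by_cases hz : z ∈ Set.Ico T.a T.b
  · obtain ⟨α, hα⟩ := T.exists_intervalImg hz
    refine ⟨T.lepImg α + T.len α - z, by rcases hα with ⟨h1, h2⟩; linarith, fun w hw1 hw2 => ?_⟩
    have hwα : w ∈ T.intervalImg α := ⟨le_trans hα.1 hw1, by linarith⟩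
    rw [T.invFun_eq_of_mem hwα, T.invFun_eq_of_mem hα]
    ring
  · rcases lt_or_ge z T.a with h | h
    · refine ⟨T.a - z, by linarith, fun w hw1 hw2 => ?_⟩
      have hw : w ∉ Set.Ico T.a T.b := fun hc => by rcases hc with ⟨h1, _⟩; linarith
      rw [T.invFun_eq_self hw, T.invFun_eq_self hz]
      ring
    · have hzb : T.b ≤ z := by
        by_contra hc
        exact hz ⟨h, lt_of_not_ge hc⟩
      refine ⟨1, one_pos, fun w hw1 hw2 => ?_⟩
      have hw : w ∉ Set.Ico T.a T.b := fun hc => by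
        rcases hc with ⟨_, h2⟩; linarith
      rw [T.invFun_eq_self hw, T.invFun_eq_self hz]
      ring

/-- left local translation for toFun, away from cutsD -/
lemma toFun_left_loc {z : ℝ} (hz : z ∉ T.cutsD) :
    ∃ δ > 0, ∀ w, z - δ < w → w ≤ z → T.toFun w = T.toFun z + (w - z) := by
  by_cases hzI : z ∈ Set.Ico T.a T.b
  · obtain ⟨α, hα⟩ := T.exists_interval hzI
    have hlt : T.lep α < z := by
      rcases lt_or_eq_of_le hα.1 with h | h
      · exact h
      · exact absurd (Or.inl ⟨α, h.symm⟩) hz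
    refine ⟨z - T.lep α, by linarith, fun w hw1 hw2 => ?_⟩
    have hwα : w ∈ T.interval α := ⟨by linarith, lt_of_le_of_lt hw2 hα.2⟩
    rw [T.toFun_eq_of_mem hwα, T.toFun_eq_of_mem hα]
    ring
  · rcases lt_or_ge z T.a with h | h
    · refine ⟨1, one_pos, fun w hw1 hw2 => ?_⟩
      have hw : w ∉ Set.Ico T.a T.b := fun hc => by rcases hc with ⟨h1, _⟩; linarith
      rw [T.toFun_eq_self hw, T.toFun_eq_self hzI]
      ring
    · have hzb : T.b ≤ z := by
        by_contra hc
        exact hzI ⟨h, lt_of_not_ge hc⟩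
      have hzb' : T.b < z := lt_of_le_of_ne hzb (fun hc => hz (Or.inr hc.symm))
      refine ⟨z - T.b, by linarith, fun w hw1 hw2 => ?_⟩
      have hw : w ∉ Set.Ico T.a T.b := fun hc => by rcases hc with ⟨_, h2⟩; linarith
      rw [T.toFun_eq_self hw, T.toFun_eq_self hzI]
      ring

/-- left local translation for invFun, away from cutsI -/
lemma invFun_left_loc {z : ℝ} (hz : z ∉ T.cutsI) :
    ∃ δ > 0, ∀ w, z - δ < w → w ≤ z → T.invFun w = T.invFun z + (w - z) := by
  by_cases hzI : z ∈ Set.Ico T.a T.b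
  · obtain ⟨α, hα⟩ := T.exists_intervalImg hzI
    have hlt : T.lepImg α < z := by
      rcases lt_or_eq_of_le hα.1 with h | h
      · exact h
      · exact absurd (Or.inl ⟨α, h.symm⟩) hz
    refine ⟨z - T.lepImg α, by linarith, fun w hw1 hw2 => ?_⟩
    have hwα : w ∈ T.intervalImg α := ⟨by linarith, lt_of_le_of_lt hw2 hα.2⟩
    rw [T.invFun_eq_of_mem hwα, T.invFun_eq_of_mem hα]
    ring
  · rcases lt_or_ge z T.a with h | h
    · refine ⟨1, one_pos, fun w hw1 hw2 => ?_⟩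
      have hw : w ∉ Set.Ico T.a T.b := fun hc => by rcases hc with ⟨h1, _⟩; linarith
      rw [T.invFun_eq_self hw, T.invFun_eq_self hzI]
      ring
    · have hzb : T.b ≤ z := by
        by_contra hc
        exact hzI ⟨h, lt_of_not_ge hc⟩
      have hzb' : T.b < z := lt_of_le_of_ne hzb (fun hc => hz (Or.inr hc.symm))
      refine ⟨z - T.b, by linarith, fun w hw1 hw2 => ?_⟩
      have hw : w ∉ Set.Ico T.a T.b := fun hc => by rcases hc with ⟨_, h2⟩; linarith
      rw [T.invFun_eq_self hw, T.invFun_eq_self hzI]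
      ring

/-- two-sided local translation off cutsD -/
lemma toFun_loc {z : ℝ} (hz : z ∉ T.cutsD) :
    ∃ δ > 0, ∀ w, z - δ < w → w < z + δ → T.toFun w = T.toFun z + (w - z) := by
  obtain ⟨δ1, hδ1, h1⟩ := T.toFun_right_loc z
  obtain ⟨δ2, hδ2, h2⟩ := T.toFun_left_loc hz
  refine ⟨min δ1 δ2, lt_min hδ1 hδ2, fun w hw1 hw2 => ?_⟩
  rcases le_or_gt z w with h | h
  · exact h1 w h (lt_of_lt_of_le hw2 (by simp [min_le_left]))
  · refine h2 w ?_ h.le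
    have : z - δ2 ≤ z - min δ1 δ2 := by
      have := min_le_right δ1 δ2; linarith
    linarith

lemma toFun_lep (α : Fin T.d) : T.toFun (T.lep α) = T.lepImg α := by
  have h : T.lep α ∈ T.interval α := ⟨le_refl _, by have := T.len_pos α; linarith⟩
  rw [T.toFun_eq_of_mem h]
  unfold transl; ring

lemma cutsD_map : ∀ c ∈ T.cutsD, T.toFun c ∈ T.cutsI := by
  rintro c (⟨α, rfl⟩ | rfl)
  · rw [T.toFun_lep]; exact Or.inl ⟨α, rfl⟩
  · rw [T.toFun_eq_self (by simp [Set.mem_Ico])]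
    exact Or.inr rfl

lemma toFun_a_mem : T.toFun T.a ∈ T.cutsI := by
  obtain ⟨α, hα⟩ := T.exists_interval (Set.mem_Ico.mpr ⟨le_refl _, T.hab⟩)
  have ha : T.lep α = T.a := le_antisymm hα.1 (T.pl_ge T.perm0 α)
  rw [← ha, T.toFun_lep]
  exact Or.inl ⟨α, rfl⟩

/-- adjacency: left-translation below a forward cut lands in a backward cut -/
lemma cut_adj {c : ℝ} (hc : c ∈ T.cutsD) (hca : T.a < c) :
    ∃ δ > 0, ∃ τ, (∀ w, c - δ < w → w < c → T.toFun w = w + τ) ∧ c + τ ∈ T.cutsI := by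
  have hpred : ∃ β, T.pl T.perm0 β + T.len β = c := by
    apply T.pl_pred_adj T.perm0
    rcases hc with ⟨α, rfl⟩ | rfl
    · exact Or.inl ⟨⟨α, rfl⟩, hca⟩
    · exact Or.inr rfl
  obtain ⟨β, hβ⟩ := hpred
  refine ⟨T.len β, T.len_pos β, T.transl β, fun w hw1 hw2 => ?_, ?_⟩
  · have hwβ : w ∈ T.interval β := by
      constructor
      · show T.pl T.perm0 β ≤ w
        linarith
      · show w < T.pl T.perm0 β + T.len β
        linarith
    rw [T.toFun_eq_of_mem hwβ]
  · have : c + T.transl β = T.lepImg β + T.len β := by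
      unfold transl
      have : (T.lep β : ℝ) = T.pl T.perm0 β := rfl
      linarith
    rw [this]
    rcases T.pl_succ_adj T.perm1 β with h | ⟨α, hα⟩
    · exact Or.inr h
    · exact Or.inl ⟨α, hα.symm⟩

/-- iterated right local translation -/
lemma toFun_iter_right_loc (z : ℝ) (n : ℕ) :
    ∃ δ > 0, ∀ w, z ≤ w → w < z + δ → T.toFun^[n] w = T.toFun^[n] z + (w - z) := by
  induction n generalizing z with
  | zero => exact ⟨1, one_pos, fun w _ _ => by simp⟩
  | succ n ih =>
    obtain ⟨δ0, hδ0, h0⟩ := T.toFun_right_loc z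
    obtain ⟨δ1, hδ1, h1⟩ := ih (T.toFun z)
    refine ⟨min δ0 δ1, lt_min hδ0 hδ1, fun w hw1 hw2 => ?_⟩
    rw [Function.iterate_succ_apply, Function.iterate_succ_apply]
    have hTw : T.toFun w = T.toFun z + (w - z) :=
      h0 w hw1 (lt_of_lt_of_le hw2 (by linarith [min_le_left δ0 δ1]))
    rw [hTw]
    have := h1 (T.toFun z + (w - z)) (by linarith) (by
      have := lt_of_lt_of_le hw2 (by linarith [min_le_right δ0 δ1] : z + min δ0 δ1 ≤ z + δ1)
      linarith)
    rw [this]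
    ring

end IET

namespace IET

variable (T : IET)

/-! ### measure lemmas and no periodic interval -/

lemma image_decomp (S : Set ℝ) :
    T.toFun '' S = ((S \ Set.Ico T.a T.b) ∪ ⋃ α, (fun z => z + T.transl α) '' (S ∩ T.interval α)) := by
  ext z
  constructor
  · rintro ⟨w, hw, rfl⟩
    by_cases hwI : w ∈ Set.Ico T.a T.b
    · obtain ⟨α, hα⟩ := T.exists_interval hwI
      right
      exact Set.mem_iUnion.mpr ⟨α, ⟨w, ⟨hw, hα⟩, (T.toFun_eq_of_mem hα).symm⟩⟩
    · left
      rw [T.toFun_eq_self hwI]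
      exact ⟨hw, hwI⟩
  · rintro (⟨hz, hzI⟩ | hz)
    · exact ⟨z, hz, T.toFun_eq_self hzI⟩
    · obtain ⟨α, w, ⟨hwS, hwα⟩, rfl⟩ := Set.mem_iUnion.mp hz
      exact ⟨w, hwS, T.toFun_eq_of_mem hwα⟩

lemma image_measurable {S : Set ℝ} (hS : MeasurableSet S) : MeasurableSet (T.toFun '' S) := by
  rw [image_decomp]
  apply MeasurableSet.union
  · exact hS.diff measurableSet_Ico
  · apply MeasurableSet.iUnion
    intro α
    rw [Set.image_add_right]
    exact (hS.inter measurableSet_Ico).preimage (measurable_add_const _)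

lemma image_vol_le {S : Set ℝ} (hS : MeasurableSet S) : volume (T.toFun '' S) ≤ volume S := by
  rw [image_decomp]
  calc volume ((S \ Set.Ico T.a T.b) ∪ ⋃ α, (fun z => z + T.transl α) '' (S ∩ T.interval α))
      ≤ volume (S \ Set.Ico T.a T.b) + volume (⋃ α, (fun z => z + T.transl α) '' (S ∩ T.interval α)) :=
        measure_union_le _ _
    _ ≤ volume (S \ Set.Ico T.a T.b) + ∑ α, volume ((fun z => z + T.transl α) '' (S ∩ T.interval α)) := by
        gcongr
        exact measure_iUnion_fintype_le _ _
    _ = volume (S \ Set.Ico T.a T.b) + ∑ α, volume (S ∩ T.interval α) := by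
        congr 1
        apply Finset.sum_congr rfl
        intro α _
        rw [Set.image_add_right]
        exact measure_preimage_add_right volume _ _
    _ = volume (S \ Set.Ico T.a T.b) + volume (S ∩ Set.Ico T.a T.b) := by
        congr 1
        rw [← measure_biUnion_finset]
        · congr 1
          ext z
          simp only [Set.mem_iUnion, Finset.mem_univ, exists_true_left, Set.mem_inter_iff]
          constructor
          · rintro ⟨α, hz, hα⟩
            exact ⟨hz, T.interval_sub α hα⟩
          · rintro ⟨hz, hzI⟩
            obtain ⟨α, hα⟩ := T.exists_interval hzI
            exact ⟨α, hz, hα⟩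
        · intro α _ β _ hne
          simp only [Function.onFun]
          apply Set.disjoint_left.mpr
          rintro z ⟨_, hz1⟩ ⟨_, hz2⟩
          exact T.pl_disj T.perm0 hne hz1 hz2
        · intro α _
          exact hS.inter measurableSet_Ico
    _ = volume S := by
        rw [← measure_diff_add_inter S (measurableSet_Ico : MeasurableSet (Set.Ico T.a T.b))]

lemma iter_image_measurable {S : Set ℝ} (hS : MeasurableSet S) (n : ℕ) :
    MeasurableSet (T.toFun^[n] '' S) := by
  induction n with
  | zero => simpa using hS
  | succ n ih =>
    rw [Function.iterate_succ', Set.image_comp]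
    exact T.image_measurable ih

lemma iter_image_vol_le {S : Set ℝ} (hS : MeasurableSet S) (n : ℕ) :
    volume (T.toFun^[n] '' S) ≤ volume S := by
  induction n with
  | zero => simp
  | succ n ih =>
    rw [Function.iterate_succ', Set.image_comp]
    exact le_trans (T.image_vol_le (T.iter_image_measurable hS n)) ih

lemma preimage_toFun (A : Set ℝ) : T.toFun ⁻¹' A = T.invFun '' A := by
  ext z
  constructor
  · intro hz
    exact ⟨T.toFun z, hz, T.invFun_toFun z⟩
  · rintro ⟨w, hw, rfl⟩
    show T.toFun (T.invFun w) ∈ A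
    rw [T.toFun_invFun]
    exact hw

/-- no periodic interval for an ergodic IET -/
lemma no_periodic_interval (hErg : Ergodic T.toFun (volume.restrict (Set.Ico T.a T.b)))
    {u v : ℝ} (huv : u < v) (hsub : Set.Ioo u v ⊆ Set.Ico T.a T.b) {P : ℕ} (hP : 1 ≤ P)
    (hid : ∀ w ∈ Set.Ioo u v, T.toFun^[P] w = w) : False := by
  classical
  set η : ℝ := min (v - u) ((T.b - T.a) / (2 * P)) with hη
  have hη0 : 0 < η := by
    apply lt_min (by linarith)
    apply div_pos (by linarith [T.hab]) (by positivity)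
  set V : Set ℝ := Set.Ioo u (u + η) with hV
  have hVsub : V ⊆ Set.Ioo u v := by
    intro w hw
    exact ⟨hw.1, lt_of_lt_of_le hw.2 (by have := min_le_left (v-u) ((T.b - T.a) / (2*P)); simp only [hη] at *; linarith)⟩
  set A : Set ℝ := ⋃ i ∈ Finset.range P, T.toFun^[i] '' V with hA
  have hAmeas : MeasurableSet A := by
    apply MeasurableSet.biUnion (Finset.range P).countable_toSet
    intro i _
    exact T.iter_image_measurable measurableSet_Ioo i
  -- T '' A = A
  have hTA : T.toFun '' A = A := by
    apply Set.Subset.antisymm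
    · rintro z ⟨w, hw, rfl⟩
      simp only [hA, Set.mem_iUnion, Finset.mem_range] at hw ⊢
      obtain ⟨i, hi, w0, hw0, rfl⟩ := hw
      by_cases hiP : i + 1 < P
      · exact ⟨i + 1, hiP, w0, hw0, by rw [Function.iterate_succ_apply']⟩
      · have hiP' : i + 1 = P := by omega
        refine ⟨0, by omega, w0, hw0, ?_⟩
        have h2 : T.toFun (T.toFun^[i] w0) = T.toFun^[i+1] w0 := (Function.iterate_succ_apply' _ _ _).symm
        rw [h2, hiP', hid w0 (hVsub hw0)]
        simp
    · intro z hz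
      simp only [hA, Set.mem_iUnion, Finset.mem_range] at hz
      obtain ⟨i, hi, w0, hw0, rfl⟩ := hz
      rcases Nat.eq_zero_or_pos i with rfl | hipos
      · -- z = w0 ∈ V; w0 = T (T^[P-1] w0)
        refine ⟨T.toFun^[P-1] w0, ?_, ?_⟩
        · simp only [hA, Set.mem_iUnion, Finset.mem_range]
          exact ⟨P - 1, by omega, w0, hw0, rfl⟩
        · have h2 : T.toFun (T.toFun^[P-1] w0) = T.toFun^[P-1+1] w0 := (Function.iterate_succ_apply' _ _ _).symm
          rw [h2, show P-1+1 = P by omega, hid w0 (hVsub hw0)]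
          simp
      · refine ⟨T.toFun^[i-1] w0, ?_, ?_⟩
        · simp only [hA, Set.mem_iUnion, Finset.mem_range]
          exact ⟨i - 1, by omega, w0, hw0, rfl⟩
        · have h2 : T.toFun (T.toFun^[i-1] w0) = T.toFun^[i-1+1] w0 := (Function.iterate_succ_apply' _ _ _).symm
          rw [h2, show i-1+1 = i by omega]
  have hpre : T.toFun ⁻¹' A = A := by
    rw [preimage_toFun]
    nth_rewrite 1 [← hTA]
    rw [← Set.image_comp]
    have : T.invFun ∘ T.toFun = id := funext T.invFun_toFun
    rw [this, Set.image_id]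
  -- ergodicity
  rcases hErg.toPreErgodic.measure_self_or_compl_eq_zero hAmeas hpre with h0 | h1
  · -- μ A = 0 but V ⊆ A ∩ Ico
    rw [Measure.restrict_apply hAmeas] at h0
    have hVA : V ⊆ A ∩ Set.Ico T.a T.b := by
      intro w hw
      refine ⟨?_, hsub (hVsub hw)⟩
      simp only [hA, Set.mem_iUnion, Finset.mem_range]
      exact ⟨0, by omega, w, hw, rfl⟩
    have := measure_mono (μ := (volume : Measure ℝ)) hVA
    rw [h0] at this
    have : volume V = 0 := le_antisymm this zero_le
    rw [hV, Real.volume_Ioo] at this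
    simp only [ENNReal.ofReal_eq_zero] at this
    linarith
  · -- μ Aᶜ = 0
    rw [Measure.restrict_apply hAmeas.compl] at h1
    -- vol Ico ≤ vol (A ∩ Ico) + vol (Aᶜ ∩ Ico) and vol(A) ≤ P * η
    have hsplit : volume (Set.Ico T.a T.b) ≤ volume (A ∩ Set.Ico T.a T.b) + volume (Aᶜ ∩ Set.Ico T.a T.b) := by
      have hsub2 : Set.Ico T.a T.b ⊆ (A ∩ Set.Ico T.a T.b) ∪ (Aᶜ ∩ Set.Ico T.a T.b) := by
        intro z hz
        by_cases h : z ∈ A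
        · exact Or.inl ⟨h, hz⟩
        · exact Or.inr ⟨h, hz⟩
      exact le_trans (measure_mono hsub2) (measure_union_le _ _)
    rw [h1, add_zero] at hsplit
    have hAle : volume A ≤ (P : ENNReal) * ENNReal.ofReal η := by
      calc volume A = volume (⋃ i ∈ Finset.range P, T.toFun^[i] '' V) := by rw [hA]
        _ ≤ ∑ i ∈ Finset.range P, volume (T.toFun^[i] '' V) := measure_biUnion_finset_le _ _
        _ ≤ ∑ i ∈ Finset.range P, ENNReal.ofReal η := by
            apply Finset.sum_le_sum
            intro i _
            calc volume (T.toFun^[i] '' V)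
                ≤ volume V := T.iter_image_vol_le (by rw [hV]; exact measurableSet_Ioo) i
              _ = ENNReal.ofReal η := by rw [hV, Real.volume_Ioo, add_sub_cancel_left]
        _ = (P : ENNReal) * ENNReal.ofReal η := by
            rw [Finset.sum_const, Finset.card_range, nsmul_eq_mul]
    have hPη : (P : ENNReal) * ENNReal.ofReal η < ENNReal.ofReal (T.b - T.a) := by
      have h1' : (P : ENNReal) * ENNReal.ofReal η = ENNReal.ofReal ((P : ℝ) * η) := by
        rw [ENNReal.ofReal_mul (by positivity : (0:ℝ) ≤ (P:ℝ)), ENNReal.ofReal_natCast]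
      rw [h1']
      refine (ENNReal.ofReal_lt_ofReal_iff (by linarith [T.hab])).mpr ?_
      have hle : η ≤ (T.b - T.a) / (2 * P) := min_le_right _ _
      have hP' : (1 : ℝ) ≤ P := by exact_mod_cast hP
      have : (P : ℝ) * η ≤ (P : ℝ) * ((T.b - T.a) / (2 * P)) := by
        apply mul_le_mul_of_nonneg_left hle (by positivity)
      have heq : (P : ℝ) * ((T.b - T.a) / (2 * P)) = (T.b - T.a) / 2 := by
        field_simp
      rw [heq] at this
      linarith [T.hab]
    have hIcovol : volume (Set.Ico T.a T.b) = ENNReal.ofReal (T.b - T.a) := Real.volume_Ico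
    have hfinal : volume (Set.Ico T.a T.b) ≤ volume A := le_trans hsplit (by
      apply measure_mono
      exact Set.inter_subset_left)
    rw [hIcovol] at hfinal
    exact absurd (le_trans hfinal hAle) (not_le.mpr hPη)

end IET

namespace IET

variable (T : IET)

/-! ### gap machine : definitions -/

/-- the reference closed set: `F` together with the endpoints -/
def gapG (F : Set ℝ) : Set ℝ := F ∪ {T.a, T.b}

/-- `p` is a gap of `F`: a maximal open interval in the complement -/
def IsGap (F : Set ℝ) (p : ℝ × ℝ) : Prop :=
  p.1 < p.2 ∧ p.1 ∈ T.gapG F ∧ p.2 ∈ T.gapG F ∧ ∀ w, p.1 < w → w < p.2 → w ∉ T.gapG F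

/-- the splitting set -/
def Dset (C0 C1 : Set ℝ) : Set ℝ := C0 ∪ C1 ∪ T.invFun '' C1

/-- a gap is split if it contains a point of `Dset` -/
def Split (C0 C1 : Set ℝ) (p : ℝ × ℝ) : Prop := ∃ c ∈ T.Dset C0 C1, c ∈ Set.Ioo p.1 p.2

/-- the translation constant on a gap (via its midpoint) -/
noncomputable def tauG (p : ℝ × ℝ) : ℝ := T.toFun ((p.1 + p.2) / 2) - (p.1 + p.2) / 2

/-- the gap map: image of an unsplit gap, enlarged to the enclosing gap -/
noncomputable def Phi (F C0 C1 : Set ℝ) (p : ℝ × ℝ) : ℝ × ℝ :=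
  if T.IsGap F p ∧ ¬ T.Split C0 C1 p then
    (sSup (T.gapG F ∩ Set.Iic (p.1 + T.tauG p)), sInf (T.gapG F ∩ Set.Ici (p.2 + T.tauG p)))
  else p

section GapMachine

variable {T}
variable {F C0 C1 : Set ℝ}

lemma gapG_closed (hFclosed : IsClosed F) : IsClosed (T.gapG F) :=
  hFclosed.union (Set.toFinite {T.a, T.b}).isClosed

lemma gapG_sub (hFsub : F ⊆ Set.Icc T.a T.b) : T.gapG F ⊆ Set.Icc T.a T.b := by
  rintro z (hz | hz)
  · exact hFsub hz
  · rcases hz with rfl | rfl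
    · exact ⟨le_refl _, T.hab.le⟩
    · exact ⟨T.hab.le, le_refl _⟩

lemma a_mem_gapG : T.a ∈ T.gapG F := Or.inr (Or.inl rfl)
lemma b_mem_gapG : T.b ∈ T.gapG F := Or.inr (Or.inr rfl)

lemma gap_sub_Ioo (hFsub : F ⊆ Set.Icc T.a T.b) {p : ℝ × ℝ} (hp : T.IsGap F p) : Set.Ioo p.1 p.2 ⊆ Set.Ioo T.a T.b := by
  intro w hw
  obtain ⟨hlt, h1, h2, _⟩ := hp
  exact ⟨lt_of_le_of_lt (gapG_sub hFsub h1).1 hw.1, lt_of_lt_of_le hw.2 (gapG_sub hFsub h2).2⟩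

/-- existence of gaps -/
lemma gap_exists (hFclosed : IsClosed F) {z : ℝ} (hz1 : z ∈ Set.Ioo T.a T.b) (hz2 : z ∉ T.gapG F) :
    ∃ p : ℝ × ℝ, T.IsGap F p ∧ z ∈ Set.Ioo p.1 p.2 := by
  classical
  set u := sSup (T.gapG F ∩ Set.Iic z) with hu
  set v := sInf (T.gapG F ∩ Set.Ici z) with hv
  have hune : (T.gapG F ∩ Set.Iic z).Nonempty := ⟨T.a, a_mem_gapG, hz1.1.le⟩
  have hubdd : BddAbove (T.gapG F ∩ Set.Iic z) := ⟨z, fun w hw => hw.2⟩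
  have hvne : (T.gapG F ∩ Set.Ici z).Nonempty := ⟨T.b, b_mem_gapG, hz1.2.le⟩
  have hvbdd : BddBelow (T.gapG F ∩ Set.Ici z) := ⟨z, fun w hw => hw.2⟩
  have humem : u ∈ T.gapG F ∩ Set.Iic z :=
    (gapG_closed hFclosed |>.inter isClosed_Iic).csSup_mem hune hubdd
  have hvmem : v ∈ T.gapG F ∩ Set.Ici z :=
    (gapG_closed hFclosed |>.inter isClosed_Ici).csInf_mem hvne hvbdd
  have huz : u < z := lt_of_le_of_ne humem.2 (fun h => hz2 (h ▸ humem.1))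
  have hzv : z < v := lt_of_le_of_ne (hvmem.2 : z ≤ v) (fun h => hz2 (h ▸ hvmem.1))
  refine ⟨(u, v), ⟨lt_trans huz hzv, humem.1, hvmem.1, ?_⟩, huz, hzv⟩
  intro w hw1 hw2 hwG
  rcases le_or_gt w z with h | h
  · exact absurd (le_csSup hubdd ⟨hwG, h⟩) (not_le.mpr hw1)
  · exact absurd (csInf_le hvbdd ⟨hwG, h.le⟩) (not_le.mpr hw2)

/-- gaps through a common point coincide -/
lemma gap_unique {p q : ℝ × ℝ} (hp : T.IsGap F p) (hq : T.IsGap F q) {w : ℝ}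
    (hwp : w ∈ Set.Ioo p.1 p.2) (hwq : w ∈ Set.Ioo q.1 q.2) : p = q := by
  obtain ⟨hp0, hp1, hp2, hpf⟩ := hp
  obtain ⟨hq0, hq1, hq2, hqf⟩ := hq
  have h11 : p.1 ≤ q.1 := by
    by_contra h
    push_neg at h
    exact hqf p.1 h (lt_trans hwp.1 hwq.2) hp1
  have h12 : q.1 ≤ p.1 := by
    by_contra h
    push_neg at h
    exact hpf q.1 h (lt_trans hwq.1 hwp.2) hq1
  have h21 : p.2 ≤ q.2 := by
    by_contra h
    push_neg at h
    exact hpf q.2 (lt_trans hwp.1 hwq.2) h hq2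
  have h22 : q.2 ≤ p.2 := by
    by_contra h
    push_neg at h
    exact hqf p.2 (lt_trans hwq.1 hwp.2) h hp2
  exact Prod.ext_iff.mpr ⟨le_antisymm h11 h12, le_antisymm h21 h22⟩

end GapMachine

end IET

namespace IET

/-- locally constant functions on an interval are constant -/
lemma loc_const_aux {φ : ℝ → ℝ} {u v : ℝ}
    (h : ∀ w ∈ Set.Ioo u v, ∃ δ > 0, ∀ w', w - δ < w' → w' < w + δ → φ w' = φ w)
    {w w' : ℝ} (hw : w ∈ Set.Ioo u v) (hw' : w' ∈ Set.Ioo u v) (hle : w < w') : φ w' = φ w := by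
  classical
  set S : Set ℝ := {t | t ∈ Set.Icc w w' ∧ φ t = φ w} with hS
  have hwS : w ∈ S := ⟨⟨le_refl _, hle.le⟩, rfl⟩
  have hSne : S.Nonempty := ⟨w, hwS⟩
  have hSbdd : BddAbove S := ⟨w', fun t ht => ht.1.2⟩
  set s := sSup S with hs
  have hws : w ≤ s := le_csSup hSbdd hwS
  have hsw' : s ≤ w' := csSup_le hSne (fun t ht => ht.1.2)
  have hsIoo : s ∈ Set.Ioo u v := ⟨lt_of_lt_of_le hw.1 hws, lt_of_le_of_lt hsw' hw'.2⟩
  obtain ⟨δ, hδ, hloc⟩ := h s hsIoo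
  have hφs : φ s = φ w := by
    obtain ⟨t, htS, hts⟩ := exists_lt_of_lt_csSup hSne (show s - δ < s by linarith)
    have h1 : φ t = φ s := hloc t hts (by linarith [htS.1.2, le_csSup hSbdd htS])
    rw [← h1, htS.2]
  have hsew : s = w' := by
    by_contra hne
    have hsltw' : s < w' := lt_of_le_of_ne hsw' hne
    set t' := min w' (s + δ / 2) with ht'
    have ht's : s < t' := lt_min hsltw' (by linarith)
    have ht'S : t' ∈ S := by
      refine ⟨⟨le_trans hws ht's.le, min_le_left _ _⟩, ?_⟩
      rw [hloc t' (by linarith) (lt_of_le_of_lt (min_le_right _ _) (by linarith))]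
      exact hφs
    exact absurd (le_csSup hSbdd ht'S) (not_le.mpr ht's)
  rw [← hsew, hφs]

lemma loc_const {φ : ℝ → ℝ} {u v : ℝ}
    (h : ∀ w ∈ Set.Ioo u v, ∃ δ > 0, ∀ w', w - δ < w' → w' < w + δ → φ w' = φ w)
    {w w' : ℝ} (hw : w ∈ Set.Ioo u v) (hw' : w' ∈ Set.Ioo u v) : φ w = φ w' := by
  rcases lt_trichotomy w w' with hlt | rfl | hlt
  · exact (loc_const_aux h hw hw' hlt).symm
  · rfl
  · exact loc_const_aux h hw' hw hlt

/-- hypotheses for the gap machine -/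
structure GapHyp (T : IET) (F C0 C1 : Set ℝ) : Prop where
  Fclosed : IsClosed F
  Fsub : F ⊆ Set.Icc T.a T.b
  C0fin : C0.Finite
  C1fin : C1.Finite
  C0D : T.cutsD ⊆ C0
  memA : ∀ z, z ∉ F → T.toFun z ∈ F → T.toFun z ∈ C1
  memC : ∀ f ∈ F, T.toFun f ∈ F ∪ C1
  memTa : T.toFun T.a ∈ C1
  adj : ∀ c ∈ C0, T.a < c → ∃ δ > 0, ∃ τ, (∀ w, c - δ < w → w < c → T.toFun w = w + τ) ∧ c + τ ∈ C1

variable {T : IET} {F C0 C1 : Set ℝ}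

lemma gap_trans (H : GapHyp T F C0 C1) {p : ℝ × ℝ} (hp : T.IsGap F p)
    (hns : ¬ T.Split C0 C1 p) : ∀ w ∈ Set.Ioo p.1 p.2, T.toFun w = w + T.tauG p := by
  have hmid : (p.1 + p.2) / 2 ∈ Set.Ioo p.1 p.2 := ⟨by linarith [hp.1], by linarith [hp.1]⟩
  intro w hw
  have hconst : T.toFun w - w = T.toFun ((p.1 + p.2) / 2) - (p.1 + p.2) / 2 := by
    apply loc_const (φ := fun z => T.toFun z - z) ?_ hw hmid
    intro z hz
    have hzC0 : z ∉ C0 := fun hc => hns ⟨z, Or.inl (Or.inl hc), hz⟩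
    have hzcD : z ∉ T.cutsD := fun hc => hzC0 (H.C0D hc)
    obtain ⟨δ, hδ, hloc⟩ := T.toFun_loc hzcD
    exact ⟨δ, hδ, fun w' h1 h2 => by
      show T.toFun w' - w' = T.toFun z - z
      rw [hloc w' h1 h2]; ring⟩
  unfold tauG
  linarith [hconst]

/-- the left endpoint maps consistently -/
lemma gap_left_end (H : GapHyp T F C0 C1) {p : ℝ × ℝ} (hp : T.IsGap F p)
    (hns : ¬ T.Split C0 C1 p) : T.toFun p.1 = p.1 + T.tauG p := by
  obtain ⟨δ, hδ, hloc⟩ := T.toFun_right_loc p.1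
  set w := min (p.1 + δ / 2) ((p.1 + p.2) / 2) with hw
  have hw1 : p.1 < w := lt_min (by linarith) (by linarith [hp.1])
  have hw2 : w < p.2 := lt_of_le_of_lt (min_le_right _ _) (by linarith [hp.1])
  have hwδ : w < p.1 + δ := lt_of_le_of_lt (min_le_left _ _) (by linarith)
  have h1 := hloc w hw1.le hwδ
  have h2 := gap_trans H hp hns w ⟨hw1, hw2⟩
  linarith [h1, h2]

/-- the right endpoint: tau agrees with left limits -/
lemma gap_right_val (H : GapHyp T F C0 C1) {p : ℝ × ℝ} (hp : T.IsGap F p)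
    (hns : ¬ T.Split C0 C1 p) {δ τ : ℝ} (hδ : 0 < δ)
    (hloc : ∀ w, p.2 - δ < w → w < p.2 → T.toFun w = w + τ) : τ = T.tauG p := by
  set w0 := max p.1 (p.2 - δ) with hw0
  have hw0lt : w0 < p.2 := max_lt hp.1 (by linarith)
  set w := (w0 + p.2) / 2 with hww
  have hw1 : w0 < w := by rw [hww]; linarith
  have hwp : w ∈ Set.Ioo p.1 p.2 := ⟨lt_of_le_of_lt (le_max_left _ _) hw1, by rw [hww]; linarith⟩
  have h1 := hloc w (lt_of_le_of_lt (le_max_right _ _) hw1) hwp.2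
  have h2 := gap_trans H hp hns w hwp
  linarith

/-- the main step lemma -/
lemma gap_step (H : GapHyp T F C0 C1) {p : ℝ × ℝ} (hp : T.IsGap F p)
    (hns : ¬ T.Split C0 C1 p) :
    T.a ≤ p.1 + T.tauG p ∧ p.2 + T.tauG p ≤ T.b ∧
    (∀ z, p.1 + T.tauG p < z → z < p.2 + T.tauG p → z ∉ T.gapG F ∧ z ∉ C1) ∧
    p.1 + T.tauG p ∈ F ∪ C1 ∧ p.2 + T.tauG p ∈ F ∪ C1 := by
  have hab := T.hab
  have hp1a : T.a ≤ p.1 := (gapG_sub H.Fsub hp.2.1).1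
  have hp2b : p.2 ≤ T.b := (gapG_sub H.Fsub hp.2.2.1).2
  have hp1Ico : p.1 ∈ Set.Ico T.a T.b := ⟨hp1a, lt_of_lt_of_le hp.1 hp2b⟩
  have hu' : T.toFun p.1 = p.1 + T.tauG p := gap_left_end H hp hns
  have hbound1 : T.a ≤ p.1 + T.tauG p := by
    rw [← hu']
    exact (T.toFun_mem_Ico hp1Ico).1
  have hbound2 : p.2 + T.tauG p ≤ T.b := by
    by_contra hcon
    push_neg at hcon
    set w0 := max p.1 (T.b - T.tauG p) with hw0
    have hw0lt : w0 < p.2 := max_lt hp.1 (by linarith)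
    set w := (w0 + p.2) / 2 with hww
    have hw1 : w0 < w := by rw [hww]; linarith
    have hwp : w ∈ Set.Ioo p.1 p.2 := ⟨lt_of_le_of_lt (le_max_left _ _) hw1, by rw [hww]; linarith⟩
    have h1 := gap_trans H hp hns w hwp
    have h2 : w ∈ Set.Ico T.a T.b := ⟨le_trans hp1a hwp.1.le, lt_of_lt_of_le hwp.2 hp2b⟩
    have h3 := (T.toFun_mem_Ico h2).2
    have h4 : T.b - T.tauG p < w := lt_of_le_of_lt (le_max_right _ _) hw1
    rw [h1] at h3
    linarith
  refine ⟨hbound1, hbound2, ?_, ?_, ?_⟩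
  · -- freeness of the image
    intro z hz1 hz2
    set w := z - T.tauG p with hwdef
    have hwp : w ∈ Set.Ioo p.1 p.2 := ⟨by rw [hwdef]; linarith, by rw [hwdef]; linarith⟩
    have hzw : T.toFun w = z := by rw [gap_trans H hp hns w hwp, hwdef]; ring
    have hwF : w ∉ F := fun hc => hp.2.2.2 w hwp.1 hwp.2 (Or.inl hc)
    have hzC1 : z ∉ C1 := by
      intro hc
      apply hns
      refine ⟨w, Or.inr ⟨z, hc, ?_⟩, hwp⟩
      rw [← hzw, T.invFun_toFun]
    refine ⟨?_, hzC1⟩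
    rintro (hzF | hzab)
    · apply hzC1
      have hmem := H.memA w hwF (by rw [hzw]; exact hzF)
      rwa [hzw] at hmem
    · rcases hzab with rfl | rfl
      · linarith
      · linarith
  · -- left endpoint image
    rw [← hu']
    rcases hp.2.1 with h | h
    · exact H.memC p.1 h
    · rcases h with h1 | h1
      · rw [h1]; exact Or.inr H.memTa
      · exfalso; rw [h1] at hp1Ico; exact absurd hp1Ico.2 (lt_irrefl _)
  · -- right endpoint image
    have hap2 : T.a < p.2 := lt_of_le_of_lt hp1a hp.1
    by_cases hC0 : p.2 ∈ C0
    · obtain ⟨δ, hδ, τ, hloc, hmem⟩ := H.adj p.2 hC0 hap2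
      have := gap_right_val H hp hns hδ hloc
      rw [← this]
      exact Or.inr hmem
    · have hp2F : p.2 ∈ F := by
        rcases hp.2.2.1 with h | h
        · exact h
        · rcases h with h1 | h1
          · exfalso; rw [h1] at hap2; exact absurd hap2 (lt_irrefl _)
          · exfalso; exact hC0 (H.C0D (h1 ▸ T.b_mem_cutsD))
      have hp2cD : p.2 ∉ T.cutsD := fun hc => hC0 (H.C0D hc)
      obtain ⟨δ, hδ, hloc⟩ := T.toFun_left_loc hp2cD
      have hτ : T.toFun p.2 - p.2 = T.tauG p :=
        gap_right_val H hp hns (τ := T.toFun p.2 - p.2) hδ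
          (fun w h1 h2 => by rw [hloc w h1 h2.le]; ring)
      have : T.toFun p.2 = p.2 + T.tauG p := by linarith
      rw [← this]
      exact H.memC p.2 hp2F

/-- the gap map is well-defined: envelope is a gap containing the image -/
lemma gap_Phi (H : GapHyp T F C0 C1) {p : ℝ × ℝ} (hp : T.IsGap F p)
    (hns : ¬ T.Split C0 C1 p) :
    T.IsGap F (T.Phi F C0 C1 p) ∧ (T.Phi F C0 C1 p).1 ≤ p.1 + T.tauG p ∧
      p.2 + T.tauG p ≤ (T.Phi F C0 C1 p).2 := by
  obtain ⟨hb1, hb2, hfree, hm1, hm2⟩ := gap_step H hp hns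
  have hPhi : T.Phi F C0 C1 p =
      (sSup (T.gapG F ∩ Set.Iic (p.1 + T.tauG p)), sInf (T.gapG F ∩ Set.Ici (p.2 + T.tauG p))) :=
    if_pos ⟨hp, hns⟩
  set u' := p.1 + T.tauG p with hu'
  set v' := p.2 + T.tauG p with hv'
  have hu'v' : u' < v' := by rw [hu', hv']; linarith [hp.1]
  have hune : (T.gapG F ∩ Set.Iic u').Nonempty := ⟨T.a, a_mem_gapG, hb1⟩
  have hubdd : BddAbove (T.gapG F ∩ Set.Iic u') := ⟨u', fun w hw => hw.2⟩
  have hvne : (T.gapG F ∩ Set.Ici v').Nonempty := ⟨T.b, b_mem_gapG, hb2⟩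
  have hvbdd : BddBelow (T.gapG F ∩ Set.Ici v') := ⟨v', fun w hw => hw.2⟩
  have humem : sSup (T.gapG F ∩ Set.Iic u') ∈ T.gapG F ∩ Set.Iic u' :=
    (gapG_closed H.Fclosed |>.inter isClosed_Iic).csSup_mem hune hubdd
  have hvmem : sInf (T.gapG F ∩ Set.Ici v') ∈ T.gapG F ∩ Set.Ici v' :=
    (gapG_closed H.Fclosed |>.inter isClosed_Ici).csInf_mem hvne hvbdd
  rw [hPhi]
  refine ⟨⟨?_, humem.1, hvmem.1, ?_⟩, humem.2, hvmem.2⟩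
  · exact lt_of_le_of_lt humem.2 (lt_of_lt_of_le hu'v' hvmem.2)
  · intro w hw1 hw2 hwG
    rcases le_or_gt w u' with h | h
    · exact absurd (le_csSup hubdd ⟨hwG, h⟩) (not_le.mpr hw1)
    · rcases le_or_gt v' w with h2 | h2
      · exact absurd (csInf_le hvbdd ⟨hwG, h2⟩) (not_le.mpr hw2)
      · exact (hfree w h h2).1 hwG

/-- exactness: if the image gap is unsplit, the image fills it -/
lemma Phi_exact (H : GapHyp T F C0 C1) {p : ℝ × ℝ} (hp : T.IsGap F p)
    (hns : ¬ T.Split C0 C1 p) (hns2 : ¬ T.Split C0 C1 (T.Phi F C0 C1 p)) :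
    (T.Phi F C0 C1 p).1 = p.1 + T.tauG p ∧ (T.Phi F C0 C1 p).2 = p.2 + T.tauG p := by
  obtain ⟨hb1, hb2, hfree, hm1, hm2⟩ := gap_step H hp hns
  obtain ⟨hgap2, hle1, hle2⟩ := gap_Phi H hp hns
  set q := T.Phi F C0 C1 p with hq
  have hu'v' : p.1 + T.tauG p < p.2 + T.tauG p := by linarith [hp.1]
  constructor
  · by_contra hne
    have hlt : q.1 < p.1 + T.tauG p := lt_of_le_of_ne hle1 hne
    have hIoo : p.1 + T.tauG p ∈ Set.Ioo q.1 q.2 := ⟨hlt, lt_of_lt_of_le hu'v' hle2⟩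
    rcases hm1 with h | h
    · exact hgap2.2.2.2 _ hIoo.1 hIoo.2 (Or.inl h)
    · exact hns2 ⟨_, Or.inl (Or.inr h), hIoo⟩
  · by_contra hne
    have hlt : p.2 + T.tauG p < q.2 := lt_of_le_of_ne hle2 (fun h => hne h.symm)
    have hIoo : p.2 + T.tauG p ∈ Set.Ioo q.1 q.2 := ⟨lt_of_le_of_lt hle1 hu'v', hlt⟩
    rcases hm2 with h | h
    · exact hgap2.2.2.2 _ hIoo.1 hIoo.2 (Or.inl h)
    · exact hns2 ⟨_, Or.inl (Or.inr h), hIoo⟩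

end IET

namespace IET

variable {T : IET} {F C0 C1 : Set ℝ}

/-- a good path: `p` is a gap and the first `n` iterates are unsplit -/
def GoodP (T : IET) (F C0 C1 : Set ℝ) (p : ℝ × ℝ) (n : ℕ) : Prop :=
  T.IsGap F p ∧ ∀ k < n, ¬ T.Split C0 C1 ((T.Phi F C0 C1)^[k] p)

lemma GoodP.mono {p : ℝ × ℝ} {n m : ℕ} (h : GoodP T F C0 C1 p n) (hmn : m ≤ n) :
    GoodP T F C0 C1 p m :=
  ⟨h.1, fun k hk => h.2 k (lt_of_lt_of_le hk hmn)⟩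

lemma good_gap (H : GapHyp T F C0 C1) {p : ℝ × ℝ} {n : ℕ} (h : GoodP T F C0 C1 p n) :
    ∀ k ≤ n, T.IsGap F ((T.Phi F C0 C1)^[k] p) := by
  intro k hk
  induction k with
  | zero => simpa using h.1
  | succ k ih =>
    rw [Function.iterate_succ_apply']
    exact (gap_Phi H (ih (by omega)) (h.2 k (by omega))).1

lemma path_trans (H : GapHyp T F C0 C1) {p : ℝ × ℝ} {n : ℕ} (h : GoodP T F C0 C1 p n) :
    ∃ σ : ℝ, (∀ w ∈ Set.Ioo p.1 p.2, T.toFun^[n] w = w + σ) ∧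
      ((T.Phi F C0 C1)^[n] p).1 ≤ p.1 + σ ∧ p.2 + σ ≤ ((T.Phi F C0 C1)^[n] p).2 := by
  induction n with
  | zero => exact ⟨0, fun w _ => by simp, by simp, by simp⟩
  | succ n ih =>
    obtain ⟨σ, htr, hb1, hb2⟩ := ih (h.mono (by omega))
    have hgapn : T.IsGap F ((T.Phi F C0 C1)^[n] p) := good_gap H (h.mono (by omega)) n (le_refl _)
    have hnsn : ¬ T.Split C0 C1 ((T.Phi F C0 C1)^[n] p) := h.2 n (by omega)
    set g := (T.Phi F C0 C1)^[n] p with hg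
    obtain ⟨hgap2, hle1, hle2⟩ := gap_Phi H hgapn hnsn
    refine ⟨σ + T.tauG g, fun w hw => ?_, ?_, ?_⟩
    · rw [Function.iterate_succ_apply', htr w hw]
      have hwg : w + σ ∈ Set.Ioo g.1 g.2 := ⟨lt_of_le_of_lt hb1 (by linarith [hw.1]),
        lt_of_lt_of_le (by linarith [hw.2]) hb2⟩
      rw [gap_trans H hgapn hnsn _ hwg]
      ring
    · rw [Function.iterate_succ_apply']
      calc ((T.Phi F C0 C1) g).1 ≤ g.1 + T.tauG g := hle1
        _ ≤ p.1 + (σ + T.tauG g) := by linarith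
    · rw [Function.iterate_succ_apply']
      calc p.2 + (σ + T.tauG g) ≤ g.2 + T.tauG g := by linarith
        _ ≤ ((T.Phi F C0 C1) g).2 := hle2

lemma path_exact (H : GapHyp T F C0 C1) {p : ℝ × ℝ} {n : ℕ} (h : GoodP T F C0 C1 p n)
    {m : ℕ} (hm : m < n) :
    ∃ σ : ℝ, (∀ w ∈ Set.Ioo p.1 p.2, T.toFun^[m] w = w + σ) ∧
      ((T.Phi F C0 C1)^[m] p).1 = p.1 + σ ∧ p.2 + σ = ((T.Phi F C0 C1)^[m] p).2 := by
  induction m with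
  | zero => exact ⟨0, fun w _ => by simp, by simp, by simp⟩
  | succ m ih =>
    obtain ⟨σ, htr, he1, he2⟩ := ih (by omega)
    have hgapm : T.IsGap F ((T.Phi F C0 C1)^[m] p) := good_gap H h m (by omega)
    have hnsm : ¬ T.Split C0 C1 ((T.Phi F C0 C1)^[m] p) := h.2 m (by omega)
    have hnsm1 : ¬ T.Split C0 C1 ((T.Phi F C0 C1)^[m+1] p) := h.2 (m+1) (by omega)
    set g := (T.Phi F C0 C1)^[m] p with hg
    have hnsm1' : ¬ T.Split C0 C1 ((T.Phi F C0 C1) g) := by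
      intro hc
      apply hnsm1
      rwa [Function.iterate_succ_apply', ← hg]
    obtain ⟨hx1, hx2⟩ := Phi_exact H hgapm hnsm hnsm1'
    refine ⟨σ + T.tauG g, fun w hw => ?_, ?_, ?_⟩
    · rw [Function.iterate_succ_apply', htr w hw]
      have hwg : w + σ ∈ Set.Ioo g.1 g.2 := ⟨by rw [he1]; linarith [hw.1],
        by rw [← he2]; linarith [hw.2]⟩
      rw [gap_trans H hgapm hnsm _ hwg]
      ring
    · rw [Function.iterate_succ_apply']
      show (T.Phi F C0 C1 g).1 = _
      rw [hx1, he1]; ring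
    · rw [Function.iterate_succ_apply']
      show _ = (T.Phi F C0 C1 g).2
      rw [hx2, ← he2]; ring

/-- only finitely many gaps of length at least `l` -/
lemma long_gaps_finite (hFsub : F ⊆ Set.Icc T.a T.b) {l : ℝ} (hl : 0 < l) :
    {p : ℝ × ℝ | T.IsGap F p ∧ l ≤ p.2 - p.1}.Finite := by
  classical
  by_contra hinf
  have hinf2 : {p : ℝ × ℝ | T.IsGap F p ∧ l ≤ p.2 - p.1}.Infinite := hinf
  set f := hinf2.natEmbedding with hf
  obtain ⟨Nr, hNr⟩ := exists_nat_gt ((T.b - T.a) / l)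
  have hNl : T.b - T.a < Nr * l := by
    rw [div_lt_iff₀ hl] at hNr
    linarith
  have hdisj : ∀ i j : ℕ, i ≠ j →
      Disjoint (Set.Ioo ((f i : ℝ × ℝ)).1 ((f i : ℝ × ℝ)).2)
        (Set.Ioo ((f j : ℝ × ℝ)).1 ((f j : ℝ × ℝ)).2) := by
    intro i j hij
    rw [Set.disjoint_left]
    intro z hzi hzj
    have : (f i : ℝ × ℝ) = (f j : ℝ × ℝ) := gap_unique (f i).2.1 (f j).2.1 hzi hzj
    exact hij (f.injective (Subtype.ext this))
  have hvol : ∀ i : ℕ, ENNReal.ofReal l ≤ volume (Set.Ioo ((f i : ℝ × ℝ)).1 ((f i : ℝ × ℝ)).2) := by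
    intro i
    rw [Real.volume_Ioo]
    exact ENNReal.ofReal_le_ofReal (f i).2.2
  have hsum : (Nr : ENNReal) * ENNReal.ofReal l ≤ volume (Set.Ioo T.a T.b) := by
    calc (Nr : ENNReal) * ENNReal.ofReal l
        = ∑ _i ∈ Finset.range Nr, ENNReal.ofReal l := by
          rw [Finset.sum_const, Finset.card_range, nsmul_eq_mul]
      _ ≤ ∑ i ∈ Finset.range Nr, volume (Set.Ioo ((f i : ℝ × ℝ)).1 ((f i : ℝ × ℝ)).2) :=
          Finset.sum_le_sum (fun i _ => hvol i)
      _ = volume (⋃ i ∈ Finset.range Nr, Set.Ioo ((f i : ℝ × ℝ)).1 ((f i : ℝ × ℝ)).2) := by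
          rw [measure_biUnion_finset ?_ (fun i _ => measurableSet_Ioo)]
          intro i _ j _ hij
          exact hdisj i j hij
      _ ≤ volume (Set.Ioo T.a T.b) := by
          apply measure_mono
          intro z hz
          simp only [Set.mem_iUnion] at hz
          obtain ⟨i, _, hzi⟩ := hz
          exact gap_sub_Ioo hFsub (f i).2.1 hzi
  rw [Real.volume_Ioo] at hsum
  have : ENNReal.ofReal ((Nr : ℝ) * l) ≤ ENNReal.ofReal (T.b - T.a) := by
    rw [ENNReal.ofReal_mul (by positivity : (0:ℝ) ≤ (Nr:ℝ)), ENNReal.ofReal_natCast]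
    exact hsum
  rw [ENNReal.ofReal_le_ofReal_iff (by linarith [T.hab])] at this
  linarith

/-- only finitely many split gaps -/
lemma split_gaps_finite (H : GapHyp T F C0 C1) :
    {p : ℝ × ℝ | T.IsGap F p ∧ T.Split C0 C1 p}.Finite := by
  classical
  have hDfin : (T.Dset C0 C1).Finite :=
    (H.C0fin.union H.C1fin).union (H.C1fin.image T.invFun)
  set ψ : ℝ × ℝ → ℝ := fun p => if h : T.Split C0 C1 p then h.choose else 0 with hψ
  apply Set.Finite.of_finite_image (f := ψ)
  · apply hDfin.subset
    rintro c ⟨p, ⟨hgap, hsplit⟩, rfl⟩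
    simp only [hψ, dif_pos hsplit]
    exact hsplit.choose_spec.1
  · rintro p ⟨hgapp, hsplitp⟩ q ⟨hgapq, hsplitq⟩ heq
    simp only [hψ, dif_pos hsplitp, dif_pos hsplitq] at heq
    exact gap_unique hgapp hgapq (heq ▸ hsplitp.choose_spec.2) hsplitq.choose_spec.2

/-- every gap eventually reaches a split gap -/
lemma terminate (H : GapHyp T F C0 C1)
    (hNPI : ∀ u v : ℝ, u < v → Set.Ioo u v ⊆ Set.Ico T.a T.b → ∀ P : ℕ, 1 ≤ P →
      (∀ w ∈ Set.Ioo u v, T.toFun^[P] w = w) → False)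
    {p : ℝ × ℝ} (hp : T.IsGap F p) :
    ∃ n : ℕ, GoodP T F C0 C1 p n ∧ T.Split C0 C1 ((T.Phi F C0 C1)^[n] p) := by
  classical
  by_contra hcon
  push_neg at hcon
  have hGoodAll : ∀ n, GoodP T F C0 C1 p n := by
    intro n
    induction n with
    | zero => exact ⟨hp, fun k hk => absurd hk (by omega)⟩
    | succ n ih =>
      refine ⟨hp, fun k hk => ?_⟩
      rcases Nat.lt_succ_iff_lt_or_eq.mp hk with h | rfl
      · exact ih.2 k h
      · exact hcon k ih
  have hlp : 0 < p.2 - p.1 := by linarith [hp.1]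
  have hSfin : {q : ℝ × ℝ | T.IsGap F q ∧ p.2 - p.1 ≤ q.2 - q.1}.Finite :=
    long_gaps_finite H.Fsub hlp
  have hmemS : ∀ n : ℕ, (T.Phi F C0 C1)^[n] p ∈ {q : ℝ × ℝ | T.IsGap F q ∧ p.2 - p.1 ≤ q.2 - q.1} := by
    intro n
    obtain ⟨σ, _, hb1, hb2⟩ := path_trans H (hGoodAll n)
    exact ⟨good_gap H (hGoodAll n) n (le_refl _), by linarith⟩
  have : Finite ↥{q : ℝ × ℝ | T.IsGap F q ∧ p.2 - p.1 ≤ q.2 - q.1} := hSfin.to_subtype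
  obtain ⟨n, m, hnm, heq⟩ := Finite.exists_ne_map_eq_of_infinite
    (fun n : ℕ => (⟨(T.Phi F C0 C1)^[n] p, hmemS n⟩ : ↥{q : ℝ × ℝ | T.IsGap F q ∧ p.2 - p.1 ≤ q.2 - q.1}))
  have heq' : (T.Phi F C0 C1)^[n] p = (T.Phi F C0 C1)^[m] p := congrArg Subtype.val heq
  have key : ∀ n m : ℕ, n < m → (T.Phi F C0 C1)^[n] p = (T.Phi F C0 C1)^[m] p → False := by
    intro n m hlt heq2
    have hgap0 : T.IsGap F ((T.Phi F C0 C1)^[n] p) := good_gap H (hGoodAll n) n (le_refl _)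
    have hgood0 : GoodP T F C0 C1 ((T.Phi F C0 C1)^[n] p) (m - n) := by
      refine ⟨hgap0, fun k _ => ?_⟩
      have hiter : (T.Phi F C0 C1)^[k] ((T.Phi F C0 C1)^[n] p) = (T.Phi F C0 C1)^[k + n] p :=
        (Function.iterate_add_apply _ k n p).symm
      rw [hiter]
      exact (hGoodAll (k + n + 1)).2 (k + n) (by omega)
    obtain ⟨σ, htr, hb1, hb2⟩ := path_trans H hgood0
    have hmn : (T.Phi F C0 C1)^[m - n] ((T.Phi F C0 C1)^[n] p) = (T.Phi F C0 C1)^[n] p := by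
      rw [← Function.iterate_add_apply, show m - n + n = m by omega, ← heq2]
    rw [hmn] at hb1 hb2
    have hσ : σ = 0 := by linarith
    refine hNPI ((T.Phi F C0 C1)^[n] p).1 ((T.Phi F C0 C1)^[n] p).2 hgap0.1 ?_ (m - n) (by omega) ?_
    · intro w hw
      have := gap_sub_Ioo H.Fsub hgap0 hw
      exact ⟨this.1.le, this.2⟩
    · intro w hw
      rw [htr w hw, hσ, add_zero]
  rcases Ne.lt_or_gt hnm with hlt | hlt
  · exact key n m hlt heq'
  · exact key m n hlt heq'.symm

end IET

namespace IET

variable {T : IET} {F C0 C1 : Set ℝ}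

/-- data of the final step of a gap's path -/
lemma last_gap (H : GapHyp T F C0 C1) {p : ℝ × ℝ} {n : ℕ} (hn : 1 ≤ n)
    (hgood : GoodP T F C0 C1 p n) {σ : ℝ}
    (hσ : ∀ w ∈ Set.Ioo p.1 p.2, T.toFun^[n] w = w + σ) :
    ∃ g : ℝ × ℝ, T.IsGap F g ∧ ¬ T.Split C0 C1 g ∧ g.2 - g.1 = p.2 - p.1 ∧
      g.1 + T.tauG g = p.1 + σ ∧ g.2 + T.tauG g = p.2 + σ ∧
      (p.2 + σ ∈ F ∪ C1) ∧
      ((T.Phi F C0 C1)^[n] p).1 ≤ p.1 + σ ∧ p.2 + σ ≤ ((T.Phi F C0 C1)^[n] p).2 := by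
  obtain ⟨m, rfl⟩ : ∃ m, n = m + 1 := ⟨n - 1, by omega⟩
  obtain ⟨σ', htr', he1, he2⟩ := path_exact H hgood (show m < m + 1 by omega)
  have hgapm : T.IsGap F ((T.Phi F C0 C1)^[m] p) := good_gap H hgood m (by omega)
  have hnsm : ¬ T.Split C0 C1 ((T.Phi F C0 C1)^[m] p) := hgood.2 m (by omega)
  set g := (T.Phi F C0 C1)^[m] p with hg
  have hmid : (p.1 + p.2) / 2 ∈ Set.Ioo p.1 p.2 := ⟨by linarith [hgood.1.1], by linarith [hgood.1.1]⟩
  have hmidg : (p.1 + p.2) / 2 + σ' ∈ Set.Ioo g.1 g.2 :=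
    ⟨by rw [he1]; linarith [hmid.1], by rw [← he2]; linarith [hmid.2]⟩
  have hστ : σ = σ' + T.tauG g := by
    have h1 := hσ _ hmid
    have h2 : T.toFun^[m+1] ((p.1 + p.2) / 2) = (p.1 + p.2) / 2 + σ' + T.tauG g := by
      rw [Function.iterate_succ_apply', htr' _ hmid]
      rw [gap_trans H hgapm hnsm _ hmidg]
    rw [h1] at h2
    linarith
  obtain ⟨hb1, hb2, hfree, hm1, hm2⟩ := gap_step H hgapm hnsm
  obtain ⟨hgap2, hle1, hle2⟩ := gap_Phi H hgapm hnsm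
  refine ⟨g, hgapm, hnsm, by linarith [he1, he2], by rw [he1] at *; linarith,
    by rw [← he2] at *; linarith, ?_, ?_, ?_⟩
  · have : p.2 + σ = g.2 + T.tauG g := by rw [← he2]; linarith
    rw [this]
    exact hm2
  · have hiter : (T.Phi F C0 C1)^[m+1] p = T.Phi F C0 C1 g := by
      rw [Function.iterate_succ_apply', hg]
    rw [hiter]
    calc (T.Phi F C0 C1 g).1 ≤ g.1 + T.tauG g := hle1
      _ = p.1 + σ := by rw [he1] at *; linarith
  · have hiter : (T.Phi F C0 C1)^[m+1] p = T.Phi F C0 C1 g := by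
      rw [Function.iterate_succ_apply', hg]
    rw [hiter]
    calc p.2 + σ = g.2 + T.tauG g := by rw [← he2] at *; linarith
      _ ≤ (T.Phi F C0 C1 g).2 := hle2

/-- two last gaps with the same right image point coincide -/
lemma last_gap_unique (H : GapHyp T F C0 C1) {g g' : ℝ × ℝ}
    (hg : T.IsGap F g) (hns : ¬ T.Split C0 C1 g)
    (hg' : T.IsGap F g') (hns' : ¬ T.Split C0 C1 g')
    (heq : g.2 + T.tauG g = g'.2 + T.tauG g') : g = g' := by
  have hq1 : g.1 + T.tauG g < g.2 + T.tauG g := by linarith [hg.1]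
  have hq2 : g'.1 + T.tauG g' < g.2 + T.tauG g := by rw [heq]; linarith [hg'.1]
  set z := (max (g.1 + T.tauG g) (g'.1 + T.tauG g') + (g.2 + T.tauG g)) / 2 with hz
  have hmax1 := le_max_left (g.1 + T.tauG g) (g'.1 + T.tauG g')
  have hmax2 := le_max_right (g.1 + T.tauG g) (g'.1 + T.tauG g')
  have hmaxlt : max (g.1 + T.tauG g) (g'.1 + T.tauG g') < g.2 + T.tauG g := max_lt hq1 hq2
  have hz1 : g.1 + T.tauG g < z := by rw [hz]; linarith
  have hz2 : g'.1 + T.tauG g' < z := by rw [hz]; linarith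
  have hzq : z < g.2 + T.tauG g := by rw [hz]; linarith
  have hzq' : z < g'.2 + T.tauG g' := by rw [← heq]; exact hzq
  have hwg : z - T.tauG g ∈ Set.Ioo g.1 g.2 := ⟨by linarith, by linarith⟩
  have hwg' : z - T.tauG g' ∈ Set.Ioo g'.1 g'.2 := ⟨by linarith, by linarith⟩
  have hTw : T.toFun (z - T.tauG g) = z := by rw [gap_trans H hg hns _ hwg]; ring
  have hTw' : T.toFun (z - T.tauG g') = z := by rw [gap_trans H hg' hns' _ hwg']; ring
  have hww' : z - T.tauG g = z - T.tauG g' := T.toFun_bijective.1 (by rw [hTw, hTw'])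
  exact gap_unique hg hg' hwg (hww' ▸ hwg')

/-- there are only finitely many gaps -/
lemma gaps_finite (H : GapHyp T F C0 C1)
    (hNPI : ∀ u v : ℝ, u < v → Set.Ioo u v ⊆ Set.Ico T.a T.b → ∀ P : ℕ, 1 ≤ P →
      (∀ w ∈ Set.Ioo u v, T.toFun^[P] w = w) → False) :
    {p : ℝ × ℝ | T.IsGap F p}.Finite := by
  classical
  -- data assignment
  have hdata : ∀ p : ℝ × ℝ, T.IsGap F p →
      ∃ (s : ℝ × ℝ) (c : ℝ) (n : ℕ) (σ : ℝ),
        (T.IsGap F s ∧ T.Split C0 C1 s) ∧ (c = s.2 ∨ c ∈ C1) ∧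
        GoodP T F C0 C1 p n ∧ (∀ w ∈ Set.Ioo p.1 p.2, T.toFun^[n] w = w + σ) ∧
        p.2 + σ = c ∧ (T.Phi F C0 C1)^[n] p = s := by
    intro p hp
    obtain ⟨n, hgood, hsplit⟩ := terminate H hNPI hp
    obtain ⟨σ, htr, hb1, hb2⟩ := path_trans H hgood
    have hsgap : T.IsGap F ((T.Phi F C0 C1)^[n] p) := good_gap H hgood n (le_refl _)
    rcases Nat.eq_zero_or_pos n with rfl | hn
    · -- n = 0 : σ = 0 and s = p
      have hσ0 : σ = 0 := by
        have hmid : (p.1 + p.2) / 2 ∈ Set.Ioo p.1 p.2 := ⟨by linarith [hp.1], by linarith [hp.1]⟩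
        have := htr _ hmid
        simp at this
        linarith
      exact ⟨p, p.2, 0, σ, ⟨hp, by simpa using hsplit⟩, Or.inl rfl, hgood, htr,
        by rw [hσ0]; ring, by simp⟩
    · obtain ⟨g, hggap, hgns, hglen, hge1, hge2, hmem, hbb1, hbb2⟩ := last_gap H hn hgood htr
      refine ⟨(T.Phi F C0 C1)^[n] p, p.2 + σ, n, σ, ⟨hsgap, hsplit⟩, ?_, hgood, htr, rfl, rfl⟩
      rcases hmem with hF | hC1
      · left
        -- p.2 + σ ∈ F : must be the right end of the split gap
        have hlt : ((T.Phi F C0 C1)^[n] p).1 < p.2 + σ := by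
          calc ((T.Phi F C0 C1)^[n] p).1 ≤ p.1 + σ := hbb1
            _ < p.2 + σ := by linarith [hp.1]
        rcases lt_or_eq_of_le hbb2 with hlt2 | heq2
        · exact absurd (Or.inl hF) (hsgap.2.2.2 _ hlt hlt2)
        · exact heq2
      · exact Or.inr hC1
  -- the collection of possible data values is finite
  have hSGfin : {s : ℝ × ℝ | T.IsGap F s ∧ T.Split C0 C1 s}.Finite := split_gaps_finite H
  set R : Set ((ℝ × ℝ) × ℝ) := ⋃ s ∈ {s : ℝ × ℝ | T.IsGap F s ∧ T.Split C0 C1 s},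
    {s} ×ˢ ({s.2} ∪ C1) with hR
  have hRfin : R.Finite := by
    apply Set.Finite.biUnion hSGfin
    intro s _
    exact (Set.finite_singleton s).prod ((Set.finite_singleton s.2).union H.C1fin)
  -- fibers are finite
  have hfib : ∀ s c, {p : ℝ × ℝ | T.IsGap F p ∧
      ∃ (n : ℕ) (σ : ℝ), GoodP T F C0 C1 p n ∧
        (∀ w ∈ Set.Ioo p.1 p.2, T.toFun^[n] w = w + σ) ∧ p.2 + σ = c ∧
        (T.Phi F C0 C1)^[n] p = s}.Finite := by
    intro s c
    set Fib := {p : ℝ × ℝ | T.IsGap F p ∧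
      ∃ (n : ℕ) (σ : ℝ), GoodP T F C0 C1 p n ∧
        (∀ w ∈ Set.Ioo p.1 p.2, T.toFun^[n] w = w + σ) ∧ p.2 + σ = c ∧
        (T.Phi F C0 C1)^[n] p = s} with hFib
    -- split into n = 0 part (single gap) and n ≥ 1 part (common length)
    have hsub : Fib ⊆ {s} ∪ {p : ℝ × ℝ | T.IsGap F p ∧
        ∃ (n : ℕ) (σ : ℝ), 1 ≤ n ∧ GoodP T F C0 C1 p n ∧
          (∀ w ∈ Set.Ioo p.1 p.2, T.toFun^[n] w = w + σ) ∧ p.2 + σ = c} := by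
      rintro p ⟨hpgap, n, σ, hgood, htr, hc, hs⟩
      rcases Nat.eq_zero_or_pos n with rfl | hn
      · left
        simpa using hs
      · right
        exact ⟨hpgap, n, σ, hn, hgood, htr, hc⟩
    apply Set.Finite.subset _ (hsub)
    apply (Set.finite_singleton s).union
    set Fib1 := {p : ℝ × ℝ | T.IsGap F p ∧
        ∃ (n : ℕ) (σ : ℝ), 1 ≤ n ∧ GoodP T F C0 C1 p n ∧
          (∀ w ∈ Set.Ioo p.1 p.2, T.toFun^[n] w = w + σ) ∧ p.2 + σ = c} with hFib1
    rcases Set.eq_empty_or_nonempty Fib1 with he | ⟨p0, hp0⟩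
    · rw [he]; exact Set.finite_empty
    · -- all elements have the same length as p0
      obtain ⟨hp0gap, n0, σ0, hn0, hgood0, htr0, hc0⟩ := hp0
      obtain ⟨g0, hg0gap, hg0ns, hg0len, _, hg0e2, _, _, _⟩ := last_gap H hn0 hgood0 htr0
      have hL : 0 < p0.2 - p0.1 := by linarith [hp0gap.1]
      apply Set.Finite.subset (long_gaps_finite H.Fsub hL)
      rintro p ⟨hpgap, n, σ, hn, hgood, htr, hc⟩
      obtain ⟨g, hggap, hgns, hglen, _, hge2, _, _, _⟩ := last_gap H hn hgood htr
      have : g = g0 := last_gap_unique H hggap hgns hg0gap hg0ns (by rw [hge2, hg0e2, hc, hc0])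
      refine ⟨hpgap, ?_⟩
      rw [← hglen, this, hg0len]
  -- conclude
  have hcover : {p : ℝ × ℝ | T.IsGap F p} ⊆
      ⋃ sc ∈ R, {p : ℝ × ℝ | T.IsGap F p ∧
        ∃ (n : ℕ) (σ : ℝ), GoodP T F C0 C1 p n ∧
          (∀ w ∈ Set.Ioo p.1 p.2, T.toFun^[n] w = w + σ) ∧ p.2 + σ = sc.2 ∧
          (T.Phi F C0 C1)^[n] p = sc.1} := by
    intro p hp
    obtain ⟨s, c, n, σ, hsgap, hcmem, hgood, htr, hc, hPhin⟩ := hdata p hp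
    have hsR : (s, c) ∈ R := by
      rw [hR]
      exact Set.mem_biUnion hsgap ⟨rfl, hcmem⟩
    apply Set.mem_biUnion hsR
    exact ⟨hp, n, σ, hgood, htr, hc, hPhin⟩
  exact Set.Finite.subset (hRfin.biUnion (fun sc _ => hfib sc.1 sc.2)) hcover

end IET

namespace IET

variable {T : IET} {F C0 C1 : Set ℝ}

/-- the gap machine: a closed, null, infinite, almost invariant set is impossible -/
lemma gap_machine (H : GapHyp T F C0 C1)
    (hNPI : ∀ u v : ℝ, u < v → Set.Ioo u v ⊆ Set.Ico T.a T.b → ∀ P : ℕ, 1 ≤ P →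
      (∀ w ∈ Set.Ioo u v, T.toFun^[P] w = w) → False)
    (hNull : volume F = 0) (hInf : (F ∩ Set.Ioo T.a T.b).Infinite) : False := by
  classical
  have hGfin := gaps_finite H hNPI
  set GF := hGfin.toFinset with hGF
  set N := GF.card with hN
  obtain ⟨t, htsub, htcard⟩ := hInf.exists_subset_card_eq (N + 2)
  have htne : t.Nonempty := Finset.card_pos.mp (by omega)
  set mx := t.max' htne with hmx
  set t' := t.erase mx with ht'
  have ht'card : t'.card = N + 1 := by
    rw [ht', Finset.card_erase_of_mem (t.max'_mem htne), htcard]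
    omega
  have key : ∀ f ∈ t', ∃ p : ℝ × ℝ, T.IsGap F p ∧ f ≤ p.1 ∧ p.1 < p.2 ∧
      ∀ f'' ∈ t, f < f'' → p.2 ≤ f'' := by
    intro f hf
    have hft : f ∈ t := Finset.mem_of_mem_erase hf
    have hfmx : f ≠ mx := Finset.ne_of_mem_erase hf
    have hflt : f < mx := lt_of_le_of_ne (t.le_max' f hft) hfmx
    set S := t.filter (fun x => f < x) with hS
    have hSne : S.Nonempty := ⟨mx, by simp only [hS, Finset.mem_filter]; exact ⟨t.max'_mem htne, hflt⟩⟩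
    set fm := S.min' hSne with hfm
    have hfmS : fm ∈ S := S.min'_mem hSne
    have hfmt : fm ∈ t := (Finset.mem_filter.mp hfmS).1
    have hffm : f < fm := (Finset.mem_filter.mp hfmS).2
    have hfF : f ∈ F ∩ Set.Ioo T.a T.b := htsub hft
    have hfmF : fm ∈ F ∩ Set.Ioo T.a T.b := htsub hfmt
    -- find a non-F point between f and fm
    have hzex : ∃ z ∈ Set.Ioo f fm, z ∉ F := by
      by_contra hcon
      push_neg at hcon
      have hsub2 : Set.Ioo f fm ⊆ F := hcon
      have h1 := measure_mono (μ := (volume : Measure ℝ)) hsub2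
      rw [hNull, Real.volume_Ioo] at h1
      have : ENNReal.ofReal (fm - f) = 0 := le_antisymm h1 zero_le
      rw [ENNReal.ofReal_eq_zero] at this
      linarith
    obtain ⟨z, hzIoo, hzF⟩ := hzex
    have hzab : z ∈ Set.Ioo T.a T.b := ⟨lt_trans hfF.2.1 hzIoo.1, lt_trans hzIoo.2 hfmF.2.2⟩
    have hzG : z ∉ T.gapG F := by
      rintro (h | h)
      · exact hzF h
      · rcases h with rfl | rfl
        · exact absurd hzab.1 (lt_irrefl _)
        · exact absurd hzab.2 (lt_irrefl _)
    obtain ⟨p, hpgap, hzp⟩ := gap_exists H.Fclosed hzab hzG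
    refine ⟨p, hpgap, ?_, hpgap.1, ?_⟩
    · by_contra hcon
      push_neg at hcon
      exact hpgap.2.2.2 f hcon (lt_trans hzIoo.1 hzp.2) (Or.inl hfF.1)
    · intro f'' hf'' hff''
      have hp2fm : p.2 ≤ fm := by
        by_contra hcon
        push_neg at hcon
        exact hpgap.2.2.2 fm (lt_trans hzp.1 hzIoo.2) hcon (Or.inl hfmF.1)
      have : fm ≤ f'' := S.min'_le f'' (by simp only [hS, Finset.mem_filter]; exact ⟨hf'', hff''⟩)
      linarith
  set ψ : ℝ → ℝ × ℝ := fun f => if h : f ∈ t' then (key f h).choose else (0, 0) with hψ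
  have hmap : ∀ f ∈ t', ψ f ∈ GF := by
    intro f hf
    simp only [hψ, dif_pos hf]
    rw [hGF, Set.Finite.mem_toFinset]
    exact (key f hf).choose_spec.1
  have hinjaux : ∀ f₁ ∈ t', ∀ f₂ ∈ t', f₁ < f₂ → ψ f₁ = ψ f₂ → False := by
    intro f₁ h1 f₂ h2 hlt heq
    have hs1 := (key f₁ h1).choose_spec
    have hs2 := (key f₂ h2).choose_spec
    have hb1 : (ψ f₁).2 ≤ f₂ := by
      simp only [hψ, dif_pos h1]
      exact hs1.2.2.2 f₂ (Finset.mem_of_mem_erase h2) hlt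
    have hb2 : f₂ ≤ (ψ f₂).1 := by
      simp only [hψ, dif_pos h2]
      exact hs2.2.1
    have hb3 : (ψ f₁).1 < (ψ f₁).2 := by
      simp only [hψ, dif_pos h1]
      exact hs1.2.2.1
    rw [heq] at hb1 hb3
    linarith
  have hinj : Set.InjOn ψ ↑t' := by
    intro f₁ h1 f₂ h2 heq
    by_contra hne
    rcases lt_or_gt_of_ne hne with h | h
    · exact hinjaux f₁ h1 f₂ h2 h heq
    · exact hinjaux f₂ h2 f₁ h1 h heq.symm
  have := Finset.card_le_card_of_injOn ψ hmap hinj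
  omega

end IET

namespace IET

variable (T : IET)

/-! ### closure and orbit lemmas -/

lemma closure_cases {S : Set ℝ} {z : ℝ} (hz : z ∈ closure S) :
    z ∈ S ∨ z ∈ closure (S ∩ Set.Ioi z) ∨ z ∈ closure (S ∩ Set.Iio z) := by
  have hdec : S = (S ∩ Set.Iio z) ∪ ((S ∩ {z}) ∪ (S ∩ Set.Ioi z)) := by
    ext w
    simp only [Set.mem_union, Set.mem_inter_iff, Set.mem_Iio, Set.mem_Ioi, Set.mem_singleton_iff]
    constructor
    · intro hw
      rcases lt_trichotomy w z with h | h | h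
      · exact Or.inl ⟨hw, h⟩
      · exact Or.inr (Or.inl ⟨hw, h⟩)
      · exact Or.inr (Or.inr ⟨hw, h⟩)
    · rintro (⟨h, _⟩ | ⟨h, _⟩ | ⟨h, _⟩) <;> exact h
  rw [hdec, closure_union, closure_union] at hz
  rcases hz with h | h | h
  · exact Or.inr (Or.inr h)
  · have : closure (S ∩ {z}) ⊆ ({z} : Set ℝ) := by
      have h1 : S ∩ {z} ⊆ ({z} : Set ℝ) := Set.inter_subset_right
      have h2 := closure_mono h1
      simpa using h2
    have hzS : z ∈ S ∩ {z} := by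
      by_contra hc
      have : S ∩ {z} = ∅ := by
        ext w
        simp only [Set.mem_inter_iff, Set.mem_singleton_iff, Set.mem_empty_iff_false, iff_false]
        rintro ⟨hw, rfl⟩
        exact hc ⟨hw, rfl⟩
      rw [this, closure_empty] at h
      exact h
    exact Or.inl hzS.1
  · exact Or.inr (Or.inl h)

/-- local right translation transfers closure membership -/
lemma mem_closure_image_right {f : ℝ → ℝ} {S : Set ℝ} {z : ℝ} {δ : ℝ} (hδ : 0 < δ)
    (hloc : ∀ w, z ≤ w → w < z + δ → f w = f z + (w - z))
    (hz : z ∈ closure (S ∩ Set.Ioi z)) : f z ∈ closure (f '' (S ∩ Set.Ioi z)) := by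
  rw [Metric.mem_closure_iff] at hz ⊢
  intro ε hε
  obtain ⟨w, hw, hdist⟩ := hz (min δ ε) (lt_min hδ hε)
  have hwz : z < w := hw.2
  have hwd : w - z < min δ ε := by
    rw [Real.dist_eq, abs_sub_lt_iff] at hdist
    linarith [hdist.2]
  refine ⟨f w, ⟨w, hw, rfl⟩, ?_⟩
  rw [hloc w hwz.le (by linarith [min_le_left δ ε]), Real.dist_eq]
  have he : f z - (f z + (w - z)) = -(w - z) := by ring
  rw [he, abs_neg, abs_of_pos (by linarith : (0:ℝ) < w - z)]
  linarith [min_le_right δ ε]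

/-- local left translation transfers closure membership -/
lemma mem_closure_image_left {f : ℝ → ℝ} {S : Set ℝ} {z : ℝ} {δ : ℝ} (hδ : 0 < δ)
    (hloc : ∀ w, z - δ < w → w ≤ z → f w = f z + (w - z))
    (hz : z ∈ closure (S ∩ Set.Iio z)) : f z ∈ closure (f '' (S ∩ Set.Iio z)) := by
  rw [Metric.mem_closure_iff] at hz ⊢
  intro ε hε
  obtain ⟨w, hw, hdist⟩ := hz (min δ ε) (lt_min hδ hε)
  have hwz : w < z := hw.2
  have hwd : z - w < min δ ε := by
    rw [Real.dist_eq, abs_sub_lt_iff] at hdist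
    linarith [hdist.1]
  refine ⟨f w, ⟨w, hw, rfl⟩, ?_⟩
  rw [hloc w (by linarith [min_le_left δ ε]) hwz.le, Real.dist_eq]
  have he : f z - (f z + (w - z)) = z - w := by ring
  rw [he, abs_of_pos (by linarith : (0:ℝ) < z - w)]
  linarith [min_le_right δ ε]

/-- no periodic points for an ergodic IET -/
lemma no_periodic_point (hErg : Ergodic T.toFun (volume.restrict (Set.Ico T.a T.b)))
    {z : ℝ} (hz : z ∈ Set.Ico T.a T.b) {P : ℕ} (hP : 1 ≤ P) (hfix : T.toFun^[P] z = z) :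
    False := by
  obtain ⟨δ, hδ, hloc⟩ := T.toFun_iter_right_loc z P
  set δ' := min δ (T.b - z) with hδ'
  have hδ'0 : 0 < δ' := lt_min hδ (by linarith [hz.2])
  apply T.no_periodic_interval hErg (show z < z + δ' by linarith) ?_ hP ?_
  · intro w hw
    exact ⟨le_trans hz.1 hw.1.le, by
      have := min_le_right δ (T.b - z)
      have h2 := hw.2
      rw [hδ'] at h2
      linarith⟩
  · intro w hw
    rw [hloc w hw.1.le (by
      have := min_le_left δ (T.b - z)
      have h2 := hw.2
      rw [hδ'] at h2
      linarith), hfix]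
    ring

/-- measure dichotomy for almost invariant closed sets -/
lemma F_dichotomy (hErg : Ergodic T.toFun (volume.restrict (Set.Ico T.a T.b)))
    {F C1 : Set ℝ} (hFclosed : IsClosed F) (hFsub : F ⊆ Set.Icc T.a T.b) (hC1fin : C1.Finite)
    (memA : ∀ z, z ∉ F → T.toFun z ∈ F → T.toFun z ∈ C1)
    (memC : ∀ f ∈ F, T.toFun f ∈ F ∪ C1) :
    volume F = 0 ∨ Set.Ico T.a T.b ⊆ F := by
  have hFmeas : MeasurableSet F := hFclosed.measurableSet
  have hsub1 : (T.toFun ⁻¹' F) \ F ⊆ T.invFun '' C1 := by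
    rintro z ⟨hz1, hz2⟩
    exact ⟨T.toFun z, memA z hz2 hz1, T.invFun_toFun z⟩
  have hsub2 : F \ (T.toFun ⁻¹' F) ⊆ T.invFun '' C1 := by
    rintro z ⟨hz1, hz2⟩
    rcases memC z hz1 with h | h
    · exact absurd h hz2
    · exact ⟨T.toFun z, h, T.invFun_toFun z⟩
  have hnull : (volume.restrict (Set.Ico T.a T.b)) (T.invFun '' C1) = 0 := by
    rw [Measure.restrict_apply' measurableSet_Ico]
    exact measure_mono_null Set.inter_subset_left
      (Set.Finite.measure_zero (hC1fin.image T.invFun) volume)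
  have hae : T.toFun ⁻¹' F =ᵐ[volume.restrict (Set.Ico T.a T.b)] F :=
    MeasureTheory.ae_eq_set.mpr ⟨measure_mono_null hsub1 hnull, measure_mono_null hsub2 hnull⟩
  rcases hErg.quasiErgodic.ae_empty_or_univ₀ hFmeas.nullMeasurableSet hae with h | h
  · left
    have h0 : (volume.restrict (Set.Ico T.a T.b)) F = 0 := by
      rw [ae_eq_empty] at h
      exact h
    rw [Measure.restrict_apply hFmeas] at h0
    have hdiff : F ⊆ (F ∩ Set.Ico T.a T.b) ∪ {T.b} := by
      intro z hz
      by_cases hzI : z ∈ Set.Ico T.a T.b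
      · exact Or.inl ⟨hz, hzI⟩
      · right
        have := hFsub hz
        have hzb : z = T.b := by
          rcases this with ⟨h1, h2⟩
          rcases lt_or_eq_of_le h2 with h3 | h3
          · exact absurd ⟨h1, h3⟩ hzI
          · exact h3
        exact hzb
    have hle : volume F ≤ 0 :=
      calc volume F ≤ volume ((F ∩ Set.Ico T.a T.b) ∪ {T.b}) := measure_mono hdiff
        _ ≤ volume (F ∩ Set.Ico T.a T.b) + volume ({T.b} : Set ℝ) := measure_union_le _ _
        _ = 0 := by rw [h0, Real.volume_singleton, add_zero]
    exact le_antisymm hle zero_le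
  · right
    rw [ae_eq_univ] at h
    intro w hw
    by_contra hwF
    have hopen : IsOpen Fᶜ := hFclosed.isOpen_compl
    obtain ⟨r, hr, hball⟩ := Metric.isOpen_iff.mp hopen w hwF
    set J := Set.Ico w (min (w + r) T.b) with hJ
    have hJsub : J ⊆ Fᶜ ∩ Set.Ico T.a T.b := by
      intro v hv
      constructor
      · apply hball
        rw [Metric.mem_ball, Real.dist_eq, abs_sub_lt_iff]
        have h1 := hv.1
        have h2 := lt_of_lt_of_le hv.2 (min_le_left _ _)
        constructor <;> linarith
      · exact ⟨le_trans hw.1 hv.1, lt_of_lt_of_le hv.2 (min_le_right _ _)⟩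
    have hJvol : 0 < volume J := by
      rw [hJ, Real.volume_Ico]
      rw [ENNReal.ofReal_pos]
      have := hw.2
      have := lt_min (by linarith : w < w + r) this
      linarith [lt_min (show w < w + r by linarith) hw.2]
    have : (volume.restrict (Set.Ico T.a T.b)) Fᶜ = 0 := h
    rw [Measure.restrict_apply' measurableSet_Ico] at this
    have := measure_mono_null hJsub this
    rw [this] at hJvol
    exact absurd hJvol (lt_irrefl _)

end IET

namespace IET

variable (T : IET)

lemma iter_succ (x : ℝ) (n : ℤ) : T.toFun (T.iter n x) = T.iter (n + 1) x := by
  unfold iter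
  by_cases hn : 0 ≤ n
  · rw [if_pos hn, if_pos (by omega : (0:ℤ) ≤ n + 1),
      show (n+1).toNat = n.toNat + 1 by omega, Function.iterate_succ_apply']
  · push_neg at hn
    rw [if_neg (by omega : ¬ (0:ℤ) ≤ n)]
    have hm : (-n).toNat = ((-n).toNat - 1) + 1 := by omega
    rw [hm, Function.iterate_succ_apply' T.invFun, T.toFun_invFun]
    by_cases hn1 : 0 ≤ n + 1
    · have hn' : n = -1 := by omega
      rw [if_pos hn1, hn']
      simp
    · rw [if_neg hn1]
      congr 1
      omega

lemma iter_pred (x : ℝ) (n : ℤ) : T.invFun (T.iter n x) = T.iter (n - 1) x := by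
  have h := T.iter_succ x (n - 1)
  rw [sub_add_cancel] at h
  rw [← h, T.invFun_toFun]

lemma iter_mem_Ico {x : ℝ} (hx : x ∈ Set.Ico T.a T.b) (n : ℤ) :
    T.iter n x ∈ Set.Ico T.a T.b := by
  unfold iter
  by_cases hn : 0 ≤ n
  · rw [if_pos hn]; exact T.toFun_iter_mem_Ico hx _
  · rw [if_neg hn]; exact T.invFun_iter_mem_Ico hx _

lemma iter_shift (x : ℝ) (n : ℤ) (k : ℕ) :
    T.toFun^[k] (T.iter n x) = T.iter (n + k) x := by
  induction k with
  | zero => simp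
  | succ k ih =>
    rw [Function.iterate_succ_apply', ih, T.iter_succ]
    congr 1
    omega

/-- PART 1: forward-backward orbit of every point is dense -/
lemma dense_orbit (hErg : Ergodic T.toFun (volume.restrict (Set.Ico T.a T.b)))
    {x y : ℝ} (hx : x ∈ Set.Ico T.a T.b) (hy : y ∈ Set.Ico T.a T.b)
    {ε : ℝ} (hε : 0 < ε) : ∃ n : ℤ, |T.iter n x - y| < ε := by
  classical
  by_contra hcon
  push_neg at hcon
  set O : Set ℝ := Set.range (fun n : ℤ => T.iter n x) with hO
  set F : Set ℝ := closure O with hF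
  have hOIco : O ⊆ Set.Ico T.a T.b := by rintro w ⟨n, rfl⟩; exact T.iter_mem_Ico hx n
  have hOF : O ⊆ F := subset_closure
  have hTO : ∀ w ∈ O, T.toFun w ∈ O := by
    rintro w ⟨n, rfl⟩; exact ⟨n+1, (T.iter_succ x n).symm⟩
  have hT'O : ∀ w ∈ O, T.invFun w ∈ O := by
    rintro w ⟨n, rfl⟩; exact ⟨n-1, (T.iter_pred x n).symm⟩
  have hFclosed : IsClosed F := isClosed_closure
  have hFsub : F ⊆ Set.Icc T.a T.b := by
    rw [hF]
    have h2 := closure_mono hOIco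
    rwa [closure_Ico (ne_of_lt T.hab)] at h2
  have memA : ∀ z, z ∉ F → T.toFun z ∈ F → T.toFun z ∈ T.cutsI := by
    intro z hzF hTzF
    rcases closure_cases hTzF with h | h | h
    · exfalso
      apply hzF
      obtain ⟨n, hn⟩ := h
      refine hOF ⟨n - 1, ?_⟩
      show T.iter (n-1) x = z
      have hn' : T.iter n x = T.toFun z := hn
      rw [← T.iter_pred, hn', T.invFun_toFun]
    · exfalso
      apply hzF
      obtain ⟨δ, hδ, hloc⟩ := T.invFun_right_loc (T.toFun z)
      have h2 := mem_closure_image_right hδ hloc h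
      rw [T.invFun_toFun] at h2
      refine closure_mono ?_ h2
      rintro w ⟨v, ⟨hv1, _⟩, rfl⟩
      exact hT'O v hv1
    · by_contra hnot
      apply hzF
      obtain ⟨δ, hδ, hloc⟩ := T.invFun_left_loc hnot
      have h2 := mem_closure_image_left hδ hloc h
      rw [T.invFun_toFun] at h2
      refine closure_mono ?_ h2
      rintro w ⟨v, ⟨hv1, _⟩, rfl⟩
      exact hT'O v hv1
  have memC : ∀ f ∈ F, T.toFun f ∈ F ∪ T.cutsI := by
    intro f hf
    rcases closure_cases hf with h | h | h
    · exact Or.inl (hOF (hTO f h))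
    · left
      obtain ⟨δ, hδ, hloc⟩ := T.toFun_right_loc f
      have h2 := mem_closure_image_right hδ hloc h
      refine closure_mono ?_ h2
      rintro w ⟨v, ⟨hv1, _⟩, rfl⟩
      exact hTO v hv1
    · by_cases hfc : f ∈ T.cutsD
      · exact Or.inr (T.cutsD_map f hfc)
      · left
        obtain ⟨δ, hδ, hloc⟩ := T.toFun_left_loc hfc
        have h2 := mem_closure_image_left hδ hloc h
        refine closure_mono ?_ h2
        rintro w ⟨v, ⟨hv1, _⟩, rfl⟩
        exact hTO v hv1
  have H : GapHyp T F T.cutsD T.cutsI :=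
    ⟨hFclosed, hFsub, T.cutsD_finite, T.cutsI_finite, subset_refl _, memA, memC,
      T.toFun_a_mem, fun c hc hac => T.cut_adj hc hac⟩
  have hNPI : ∀ u v : ℝ, u < v → Set.Ioo u v ⊆ Set.Ico T.a T.b → ∀ P : ℕ, 1 ≤ P →
      (∀ w ∈ Set.Ioo u v, T.toFun^[P] w = w) → False :=
    fun u v huv hsub P hP hid => T.no_periodic_interval hErg huv hsub hP hid
  -- the window
  set W : Set ℝ := Set.Ioo y (min (y + ε) T.b) with hW
  have hWne : y < min (y + ε) T.b := lt_min (by linarith) hy.2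
  have hWO : ∀ w ∈ O, w ∉ W := by
    rintro w ⟨n, rfl⟩ hw
    have h1 := hcon n
    have h2 : T.iter n x - y < ε := by
      have := lt_of_lt_of_le hw.2 (min_le_left _ _)
      linarith
    have h3 : 0 < T.iter n x - y := by linarith [hw.1]
    rw [abs_of_pos h3] at h1
    linarith
  have hWF : ∀ w ∈ W, w ∉ F := by
    intro w hw hwF
    obtain ⟨o, hoW, hoO⟩ := _root_.mem_closure_iff.mp hwF W isOpen_Ioo hw
    exact hWO o hoO hoW
  rcases T.F_dichotomy hErg hFclosed hFsub T.cutsI_finite memA memC with hNull | hcover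
  · -- F is null : gap machine
    have hinj : Function.Injective (fun n : ℤ => T.iter n x) := by
      intro n m heq
      by_contra hne
      have key : ∀ n m : ℤ, n < m → T.iter n x = T.iter m x → False := by
        intro n m hlt heq2
        have hk : T.toFun^[(m - n).toNat] (T.iter n x) = T.iter n x := by
          rw [T.iter_shift, show n + (((m - n).toNat : ℕ) : ℤ) = m by omega]
          exact heq2.symm
        exact T.no_periodic_point hErg (T.iter_mem_Ico hx n) (by omega) hk
      rcases lt_or_gt_of_ne hne with h | h
      · exact key n m h heq
      · exact key m n h heq.symm
    have hOinf : O.Infinite := Set.infinite_range_of_injective hinj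
    have hInf : (F ∩ Set.Ioo T.a T.b).Infinite := by
      apply Set.Infinite.mono (s := O \ {T.a})
      · intro w hw
        have hwI := hOIco hw.1
        refine ⟨hOF hw.1, lt_of_le_of_ne hwI.1 ?_, hwI.2⟩
        intro hc
        exact hw.2 (by rw [← hc]; rfl)
      · exact hOinf.diff (Set.finite_singleton _)
    exact gap_machine H hNPI hNull hInf
  · -- F covers: contradiction with the window
    have hwmid : (y + min (y + ε) T.b) / 2 ∈ W := ⟨by linarith, by linarith⟩
    have : (y + min (y + ε) T.b) / 2 ∈ Set.Ico T.a T.b := by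
      constructor
      · have := hy.1
        linarith
      · have := min_le_right (y + ε) T.b
        linarith
    exact hWF _ hwmid (hcover this)

/-- PART 2: the backward orbit of every point is dense -/
lemma dense_back (hErg : Ergodic T.toFun (volume.restrict (Set.Ico T.a T.b)))
    {x y : ℝ} (hx : x ∈ Set.Ico T.a T.b) (hy : y ∈ Set.Ico T.a T.b)
    {ε : ℝ} (hε : 0 < ε) : ∃ m : ℕ, |T.invFun^[m] y - x| < 2 * ε := by
  classical
  by_contra hcon
  push_neg at hcon
  set O : Set ℝ := Set.range (fun m : ℕ => T.invFun^[m] y) with hO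
  set F : Set ℝ := closure O with hF
  set C1 : Set ℝ := T.cutsI ∪ {T.toFun y} with hC1
  have hOIco : O ⊆ Set.Ico T.a T.b := by rintro w ⟨m, rfl⟩; exact T.invFun_iter_mem_Ico hy m
  have hOF : O ⊆ F := subset_closure
  have hT'O : ∀ w ∈ O, T.invFun w ∈ O := by
    rintro w ⟨m, rfl⟩
    refine ⟨m+1, ?_⟩
    show T.invFun^[m+1] y = T.invFun (T.invFun^[m] y)
    rw [Function.iterate_succ_apply']
  have hTO : ∀ w ∈ O, T.toFun w ∈ O ∪ {T.toFun y} := by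
    rintro w ⟨m, rfl⟩
    rcases Nat.eq_zero_or_pos m with rfl | hm
    · right; simp
    · left
      refine ⟨m - 1, ?_⟩
      show T.invFun^[m-1] y = T.toFun (T.invFun^[m] y)
      have h1 : T.invFun^[m] y = T.invFun (T.invFun^[m-1] y) := by
        rw [← Function.iterate_succ_apply' T.invFun]
        congr 1
        omega
      rw [h1, T.toFun_invFun]
  have hFclosed : IsClosed F := isClosed_closure
  have hFsub : F ⊆ Set.Icc T.a T.b := by
    rw [hF]
    have h2 := closure_mono hOIco
    rwa [closure_Ico (ne_of_lt T.hab)] at h2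
  have memA : ∀ z, z ∉ F → T.toFun z ∈ F → T.toFun z ∈ C1 := by
    intro z hzF hTzF
    rcases closure_cases hTzF with h | h | h
    · exfalso
      apply hzF
      apply hOF
      have := hT'O _ h
      rwa [T.invFun_toFun] at this
    · exfalso
      apply hzF
      obtain ⟨δ, hδ, hloc⟩ := T.invFun_right_loc (T.toFun z)
      have h2 := mem_closure_image_right hδ hloc h
      rw [T.invFun_toFun] at h2
      refine closure_mono ?_ h2
      rintro w ⟨v, ⟨hv1, _⟩, rfl⟩
      exact hT'O v hv1
    · by_contra hnot
      apply hzF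
      have hnotI : T.toFun z ∉ T.cutsI := fun hc => hnot (Or.inl hc)
      obtain ⟨δ, hδ, hloc⟩ := T.invFun_left_loc hnotI
      have h2 := mem_closure_image_left hδ hloc h
      rw [T.invFun_toFun] at h2
      refine closure_mono ?_ h2
      rintro w ⟨v, ⟨hv1, _⟩, rfl⟩
      exact hT'O v hv1
  have hsubFC : closure (O ∪ {T.toFun y}) ⊆ F ∪ C1 := by
    rw [closure_union, closure_singleton]
    rintro w (hw | hw)
    · exact Or.inl hw
    · exact Or.inr (Or.inr hw)
  have memC : ∀ f ∈ F, T.toFun f ∈ F ∪ C1 := by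
    intro f hf
    rcases closure_cases hf with h | h | h
    · rcases hTO f h with h2 | h2
      · exact Or.inl (hOF h2)
      · exact Or.inr (Or.inr h2)
    · apply hsubFC
      obtain ⟨δ, hδ, hloc⟩ := T.toFun_right_loc f
      have h2 := mem_closure_image_right hδ hloc h
      refine closure_mono ?_ h2
      rintro w ⟨v, ⟨hv1, _⟩, rfl⟩
      exact hTO v hv1
    · by_cases hfc : f ∈ T.cutsD
      · exact Or.inr (Or.inl (T.cutsD_map f hfc))
      · apply hsubFC
        obtain ⟨δ, hδ, hloc⟩ := T.toFun_left_loc hfc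
        have h2 := mem_closure_image_left hδ hloc h
        refine closure_mono ?_ h2
        rintro w ⟨v, ⟨hv1, _⟩, rfl⟩
        exact hTO v hv1
  have hC1fin : C1.Finite := T.cutsI_finite.union (Set.finite_singleton _)
  have H : GapHyp T F T.cutsD C1 :=
    ⟨hFclosed, hFsub, T.cutsD_finite, hC1fin, subset_refl _, memA, memC,
      Or.inl T.toFun_a_mem, fun c hc hac => by
        obtain ⟨δ, hδ, τ, hloc, hmem⟩ := T.cut_adj hc hac
        exact ⟨δ, hδ, τ, hloc, Or.inl hmem⟩⟩
  have hNPI : ∀ u v : ℝ, u < v → Set.Ioo u v ⊆ Set.Ico T.a T.b → ∀ P : ℕ, 1 ≤ P →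
      (∀ w ∈ Set.Ioo u v, T.toFun^[P] w = w) → False :=
    fun u v huv hsub P hP hid => T.no_periodic_interval hErg huv hsub hP hid
  set W : Set ℝ := Set.Ioo x (min (x + 2 * ε) T.b) with hW
  have hWne : x < min (x + 2 * ε) T.b := lt_min (by linarith) hx.2
  have hWO : ∀ w ∈ O, w ∉ W := by
    rintro w ⟨m, rfl⟩ hw
    have h1 := hcon m
    have h2 : T.invFun^[m] y - x < 2 * ε := by
      have := lt_of_lt_of_le hw.2 (min_le_left _ _)
      linarith
    have h3 : 0 < T.invFun^[m] y - x := by linarith [hw.1]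
    rw [abs_of_pos h3] at h1
    linarith
  have hWF : ∀ w ∈ W, w ∉ F := by
    intro w hw hwF
    obtain ⟨o, hoW, hoO⟩ := _root_.mem_closure_iff.mp hwF W isOpen_Ioo hw
    exact hWO o hoO hoW
  rcases T.F_dichotomy hErg hFclosed hFsub hC1fin memA memC with hNull | hcover
  · have hinj : Function.Injective (fun m : ℕ => T.invFun^[m] y) := by
      intro n m heq
      by_contra hne
      have hLI : Function.LeftInverse T.toFun T.invFun := T.toFun_invFun
      have key : ∀ n m : ℕ, n < m → T.invFun^[n] y = T.invFun^[m] y → False := by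
        intro n m hlt heq2
        have h1 : T.invFun^[m] y = T.invFun^[n] (T.invFun^[m - n] y) := by
          rw [← Function.iterate_add_apply]
          congr 1
          omega
        have h2 : y = T.invFun^[m - n] y := by
          have := congrArg (T.toFun^[n]) (heq2.trans h1)
          rwa [hLI.iterate n _, hLI.iterate n _] at this
        have h3 : T.toFun^[m - n] y = y := by
          have := congrArg (T.toFun^[m - n]) h2
          rwa [hLI.iterate (m - n) _] at this
        exact T.no_periodic_point hErg hy (by omega) h3
      rcases lt_or_gt_of_ne hne with h | h
      · exact key n m h heq
      · exact key m n h heq.symm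
    have hOinf : O.Infinite := Set.infinite_range_of_injective hinj
    have hInf : (F ∩ Set.Ioo T.a T.b).Infinite := by
      apply Set.Infinite.mono (s := O \ {T.a})
      · intro w hw
        have hwI := hOIco hw.1
        refine ⟨hOF hw.1, lt_of_le_of_ne hwI.1 ?_, hwI.2⟩
        intro hc
        exact hw.2 (by rw [← hc]; rfl)
      · exact hOinf.diff (Set.finite_singleton _)
    exact gap_machine H hNPI hNull hInf
  · have hwmid : (x + min (x + 2 * ε) T.b) / 2 ∈ W := ⟨by linarith, by linarith⟩
    have hmid2 : (x + min (x + 2 * ε) T.b) / 2 ∈ Set.Ico T.a T.b := by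
      constructor
      · have := hx.1
        linarith
      · have := min_le_right (x + 2 * ε) T.b
        linarith
    exact hWF _ hwmid (hcover hmid2)

end IET

open IET

/-- an ergodic IET is minimal (every two-sided orbit is dense in `I`);
in particular for all `x, y ∈ I` and `ε > 0` there is `m ∈ ℕ` with
`|T^{-m}(y) - x| < 2ε`. -/
theorem stmt6 (T : IET)
    (hErg : Ergodic T.toFun (volume.restrict (Set.Ico T.a T.b))) :
    (∀ x ∈ Set.Ico T.a T.b, ∀ y ∈ Set.Ico T.a T.b, ∀ ε : ℝ, 0 < ε →
      ∃ n : ℤ, |T.iter n x - y| < ε) ∧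
    (∀ x ∈ Set.Ico T.a T.b, ∀ y ∈ Set.Ico T.a T.b, ∀ ε : ℝ, 0 < ε →
      ∃ m : ℕ, |T.invFun^[m] y - x| < 2 * ε) := by
  constructor
  · intro x hx y hy ε hε
    exact T.dense_orbit hErg hx hy hε
  · intro x hx y hy ε hε
    exact T.dense_back hErg hx hy hε
end
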